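/- arXiv:2502.02250 — 4 statements merged into one kernel-verified Lean document; each statement's English description precedes it below -/
import Mathlib

section
/- Let Γ be a finite connected 3-regular graph and let G be a group of automorphisms of Γ acting transitively on the edges of Γ. If G also acts transitively on the vertices of Γ, then G acts transitively on the arcs of Γ (ordered pairs of adjacent vertices). -/
open SimpleGraph Finset

/-- A finite connected cubic graph with a group of automorphisms that is
both edge-transitive and vertex-transitive is arc-transitive (for that group). -/
theorem edge_and_vertex_transitive_implies_arc_transitive
    (V : Type*) [Fintype V] [DecidableEq V] (Γ : SimpleGraph V) [DecidableRel Γ.Adj]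
    (hconn : Γ.Connected)
    (hcubic : ∀ v : V, Γ.degree v = 3)
    (G : Subgroup (Γ ≃g Γ))
    (hedge : ∀ e₁ e₂ : Sym2 V, e₁ ∈ Γ.edgeSet → e₂ ∈ Γ.edgeSet →
      ∃ g ∈ G, Sym2.map g e₁ = e₂)
    (hvert : ∀ u v : V, ∃ g ∈ G, g u = v) :
    ∀ u v u' v' : V, Γ.Adj u v → Γ.Adj u' v' →
      ∃ g ∈ G, g u = u' ∧ g v = v' := by
  classical
  intro u v u' v' huv hu'v'
  set P : V → V → Prop := fun a b => ∃ g ∈ G, g u = a ∧ g v = b with hP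
  -- every edge has at least one arc in the orbit of (u,v)
  have hone : ∀ a b, Γ.Adj a b → P a b ∨ P b a := by
    intro a b hab
    obtain ⟨g, hg, hmap⟩ := hedge s(u,v) s(a,b) huv hab
    simp only [Sym2.map_pair_eq, Sym2.eq_iff] at hmap
    rcases hmap with ⟨h1, h2⟩ | ⟨h1, h2⟩
    · exact Or.inl ⟨g, hg, h1, h2⟩
    · exact Or.inr ⟨g, hg, h1, h2⟩
  suffices hkey : P v u by
    obtain ⟨g, hg, hmap⟩ := hedge s(u,v) s(u',v') huv hu'v'
    simp only [Sym2.map_pair_eq, Sym2.eq_iff] at hmap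
    rcases hmap with ⟨h1, h2⟩ | ⟨h1, h2⟩
    · exact ⟨g, hg, h1, h2⟩
    · obtain ⟨h, hh, hh1, hh2⟩ := hkey
      refine ⟨g * h, G.mul_mem hg hh, ?_, ?_⟩
      · show g (h u) = u'; rw [hh1, h2]
      · show g (h v) = v'; rw [hh2, h1]
  by_contra hvu
  -- then the orbit is an orientation: exactly one arc per edge
  have hexc : ∀ a b, P a b → ¬ P b a := by
    rintro a b ⟨g, hg, hg1, hg2⟩ ⟨h, hh, hh1, hh2⟩
    refine hvu ⟨h⁻¹ * g, G.mul_mem (G.inv_mem hh) hg, ?_, ?_⟩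
    · show h⁻¹ (g u) = v; rw [hg1, ← hh2]; simp
    · show h⁻¹ (g v) = u; rw [hg2, ← hh1]; simp
  -- orbit closed under G
  have hPmap : ∀ (g : Γ ≃g Γ), g ∈ G → ∀ a b, P a b → P (g a) (g b) := by
    rintro g hg a b ⟨k, hk, hk1, hk2⟩
    exact ⟨g * k, G.mul_mem hg hk, by show g (k u) = g a; rw [hk1],
      by show g (k v) = g b; rw [hk2]⟩
  set out : V → ℕ := fun a => (univ.filter (fun b => Γ.Adj a b ∧ P a b)).card with hout
  set inn : V → ℕ := fun a => (univ.filter (fun b => Γ.Adj a b ∧ P b a)).card with hinn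
  have hsum3 : ∀ a, out a + inn a = 3 := by
    intro a
    have e1 : (univ.filter (fun b => Γ.Adj a b ∧ P a b))
        = ((Γ.neighborFinset a).filter (fun b => P a b)) := by
      ext b; simp [SimpleGraph.mem_neighborFinset, and_comm]
    have e2 : (univ.filter (fun b => Γ.Adj a b ∧ P b a))
        = ((Γ.neighborFinset a).filter (fun b => ¬ P a b)) := by
      ext b
      simp only [mem_filter, mem_univ, true_and, SimpleGraph.mem_neighborFinset]
      constructor
      · rintro ⟨hab, hba⟩; exact ⟨hab, hexc b a hba⟩
      · rintro ⟨hab, hnab⟩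
        exact ⟨hab, (hone a b hab).resolve_left hnab⟩
    rw [hout, hinn]
    simp only [e1, e2, Finset.card_filter_add_card_filter_not,
      SimpleGraph.card_neighborFinset_eq_degree]
    exact hcubic a
  -- out is constant
  have hconst : ∀ a a', out a = out a' := by
    intro a a'
    obtain ⟨g, hg, hga⟩ := hvert a a'
    rw [hout]
    apply Finset.card_bij (fun b _ => g b)
    · intro b hb
      simp only [mem_filter, mem_univ, true_and] at hb ⊢
      exact ⟨hga ▸ g.map_adj_iff.mpr hb.1, hga ▸ hPmap g hg a b hb.2⟩
    · intro b _ b' _ hbb'; exact g.injective hbb'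
    · intro b' hb'
      simp only [mem_filter, mem_univ, true_and] at hb'
      refine ⟨g.symm b', ?_, by simp⟩
      simp only [mem_filter, mem_univ, true_and]
      constructor
      · have := hb'.1
        rw [← hga, ← show g (g.symm b') = b' by simp] at this
        exact g.map_adj_iff.mp this
      · have := hPmap g⁻¹ (G.inv_mem hg) a' b' hb'.2
        rw [← hga] at this
        have e1 : (g⁻¹ : Γ ≃g Γ) (g a) = a := by simp
        have e2 : (g⁻¹ : Γ ≃g Γ) b' = g.symm b' := rfl
        rwa [e1, e2] at this
  -- double counting
  have hdc : ∑ a : V, out a = ∑ a : V, inn a := by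
    simp only [hout, hinn, Finset.card_filter]
    rw [Finset.sum_comm]
    apply Finset.sum_congr rfl; intro b _
    apply Finset.sum_congr rfl; intro a _
    congr 1
    simp [adj_comm]
  haveI hne : Nonempty V := hconn.nonempty
  obtain ⟨a₀⟩ := hne
  have h1 : ∑ a : V, out a = Fintype.card V * out a₀ := by
    rw [Finset.sum_congr rfl (fun a _ => hconst a a₀)]; simp [mul_comm]
  have h2 : ∑ a : V, inn a = Fintype.card V * inn a₀ := by
    have : ∀ a, inn a = inn a₀ := by
      intro a
      have := hsum3 a; have := hsum3 a₀; have := hconst a a₀; omega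
    rw [Finset.sum_congr rfl (fun a _ => this a)]; simp [mul_comm]
  have hcard : 0 < Fintype.card V := Fintype.card_pos_iff.mpr ⟨a₀⟩
  have : out a₀ = inn a₀ := by
    rw [h1, h2] at hdc
    exact Nat.eq_of_mul_eq_mul_left hcard hdc
  have := hsum3 a₀
  omega
end

section
/- An amalgamated free product A *_C B of finite groups A and B over a common finite subgroup C is residually finite. -/
open Equiv Function
-- Lemma A: free action structure
theorem freeA {A S : Type*} [Group A] [Finite A] [Finite S] (μ : A →* Equiv.Perm S)
    (hfree : ∀ a x, μ a x = x → a = 1) :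
    ∃ (k : ℕ) (e : A × Fin k ≃ S), ∀ (a b : A) (t : Fin k), e (a * b, t) = μ a (e (b, t)) := by
  letI s : Setoid S := ⟨fun x y => ∃ a : A, μ a x = y,
    ⟨fun x => ⟨1, by simp⟩,
     fun {x y} ⟨a, ha⟩ => ⟨a⁻¹, by simp [← ha]⟩,
     fun {x y z} ⟨a, ha⟩ ⟨b, hb⟩ => ⟨b * a, by simp [map_mul, ← ha, ← hb]⟩⟩⟩
  obtain ⟨k, ⟨eq⟩⟩ := Finite.exists_equiv_fin (Quotient s)
  have hf : Bijective (fun p : A × Fin k => μ p.1 (Quotient.out (eq.symm p.2))) := by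
    constructor
    · rintro ⟨a, t⟩ ⟨a', t'⟩ h
      simp only at h
      have ht : t = t' := by
        have : (Quotient.out (eq.symm t) : S) ≈ Quotient.out (eq.symm t') :=
          ⟨a'⁻¹ * a, by simp [map_mul, h]⟩
        have := Quotient.sound this
        simp only [Quotient.out_eq] at this
        simpa using eq.symm.injective this
      subst ht
      have : μ (a'⁻¹ * a) (Quotient.out (eq.symm t)) = Quotient.out (eq.symm t) := by
        simp [map_mul, h]
      have h2 : a' = a := inv_mul_eq_one.mp (hfree _ _ this)
      simp [h2]
    · intro x
      obtain ⟨a, ha⟩ : (Quotient.out (eq.symm (eq ⟦x⟧)) : S) ≈ x := by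
        simp only [Equiv.symm_apply_apply]
        exact Quotient.exact (Quotient.out_eq _)
      exact ⟨(a, eq ⟦x⟧), ha⟩
  refine ⟨k, Equiv.ofBijective _ hf, fun a b t => ?_⟩
  simp [Equiv.ofBijective, map_mul]

theorem main_ext {A C X T : Type*} [Group A] [Finite A] [Group C] [Finite C] [Finite X]
    (φA : C →* A) (hφA : Function.Injective φA)
    (P : X → Prop) (E : {x // P x} ≃ T) (μ' : A →* Equiv.Perm T) (τ : C →* Equiv.Perm X)
    (hPτ : ∀ (c : C) (x : X), P x → P (τ c x))
    (hcompat' : ∀ (c : C) (x : {x // P x}), τ c ↑x = ↑(E.symm (μ' (φA c) (E x))))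
    (hμ'free : ∀ a t, μ' a t = t → a = 1)
    (hτfree : ∀ c x, ¬ P x → τ c x = x → c = 1)
    (hdvd : Nat.card A ∣ Nat.card X) :
    ∃ σ : A →* Equiv.Perm X, (∀ c, σ (φA c) = τ c) ∧
      ∀ (a : A) (x : {x // P x}), σ a ↑x = ↑(E.symm (μ' a (E x))) := by
  classical
  let μ : A →* Equiv.Perm {x // P x} :=
    MonoidHom.mk' (fun a => (E.trans (μ' a)).trans E.symm) (by
      intro a b
      ext x
      simp [Equiv.Perm.mul_apply, map_mul])
  have hcompat : ∀ (c : C) (x : {x // P x}), τ c ↑x = ↑(μ (φA c) x) := hcompat'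
  have hμfree : ∀ a x, μ a x = x → a = 1 := by
    intro a x hx
    refine hμ'free a (E x) ?_
    have h2 := congrArg E hx
    simp only [μ, MonoidHom.mk'_apply, Equiv.trans_apply, Equiv.apply_symm_apply] at h2
    exact h2
  -- τ preserves ¬P, as an iff
  have hiff : ∀ (c : C) (x : X), ¬ P x ↔ ¬ P (τ c x) := by
    intro c x
    constructor
    · intro hx hP
      apply hx
      have := hPτ c⁻¹ _ hP
      simpa [← Equiv.Perm.mul_apply, ← map_mul] using this
    · intro hx hP
      exact hx (hPτ c x hP)
  -- restricted action on the complement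
  let τ' : C →* Equiv.Perm {x // ¬ P x} :=
    MonoidHom.mk' (fun c => (τ c).subtypePerm (fun x => (hiff c x).symm)) (by
      intro a b
      ext x
      simp [Equiv.Perm.subtypePerm_apply, map_mul]
      rfl)
  have hτ'free : ∀ c x, τ' c x = x → c = 1 := by
    rintro c ⟨x, hx⟩ h
    exact hτfree c x hx (congrArg Subtype.val h)
  -- regular action of C on A
  let ρ : C →* Equiv.Perm A :=
    MonoidHom.mk' (fun c => Equiv.mulLeft (φA c)) (by
      intro a b
      ext x
      simp [map_mul, mul_assoc])
  have hρfree : ∀ c x, ρ c x = x → c = 1 := by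
    intro c x h
    simp only [ρ, MonoidHom.mk'_apply, Equiv.coe_mulLeft] at h
    exact hφA (by rw [mul_eq_right.mp h, map_one])
  obtain ⟨k₁, e₁, he₁⟩ := freeA μ hμfree
  obtain ⟨k₂, e₂, he₂⟩ := freeA τ' hτ'free
  obtain ⟨k₃, e₃, he₃⟩ := freeA ρ hρfree
  have cardC : 0 < Nat.card C := Nat.card_pos
  have c1 : Nat.card {x // P x} = Nat.card A * k₁ := by
    rw [← Nat.card_congr e₁, Nat.card_prod, Nat.card_eq_fintype_card (α := Fin k₁),
      Fintype.card_fin]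
  have c2 : Nat.card {x // ¬ P x} = Nat.card C * k₂ := by
    rw [← Nat.card_congr e₂, Nat.card_prod, Nat.card_eq_fintype_card (α := Fin k₂),
      Fintype.card_fin]
  have c3 : Nat.card A = Nat.card C * k₃ := by
    rw [← Nat.card_congr e₃, Nat.card_prod, Nat.card_eq_fintype_card (α := Fin k₃),
      Fintype.card_fin]
  have hsplit : Nat.card X = Nat.card {x // P x} + Nat.card {x // ¬ P x} := by
    rw [← Nat.card_sum, Nat.card_congr (Equiv.sumCompl P)]
  have hdvd2 : Nat.card A ∣ Nat.card {x // ¬ P x} := by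
    rw [hsplit] at hdvd
    exact (Nat.dvd_add_right ⟨k₁, c1⟩).mp hdvd
  have hk32 : k₃ ∣ k₂ := by
    rw [c2, c3] at hdvd2
    exact (mul_dvd_mul_iff_left (a := Nat.card C) (by omega)).mp hdvd2
  obtain ⟨u, hu⟩ := hk32
  -- the equivariant identification of the complement with A × Fin u
  let e₄ : A × Fin u ≃ {x // ¬ P x} :=
    ((Equiv.prodCongr e₃.symm (Equiv.refl (Fin u))).trans
      ((Equiv.prodAssoc C (Fin k₃) (Fin u)).trans
        ((Equiv.prodCongr (Equiv.refl C) (finProdFinEquiv.trans (finCongr hu.symm))).trans e₂)))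
  have he₄ : ∀ (c : C) (a : A) (t : Fin u), e₄ (φA c * a, t) = τ' c (e₄ (a, t)) := by
    intro c a t
    have h3 : e₃.symm (φA c * a) = (c * (e₃.symm a).1, (e₃.symm a).2) := by
      rw [Equiv.symm_apply_eq, he₃]
      simp only [Prod.mk.eta, Equiv.apply_symm_apply]
      rfl
    simp only [e₄, Equiv.trans_apply, Equiv.prodCongr_apply, Equiv.coe_refl, Prod.map_apply,
      id_eq, h3, Equiv.prodAssoc_apply]
    exact he₂ c _ _
  -- the permutation of the complement induced by left multiplication by a
  let χ : A →* Equiv.Perm {x // ¬ P x} :=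
    MonoidHom.mk' (fun a =>
      (e₄.symm.trans (Equiv.prodCongr (Equiv.mulLeft a) (Equiv.refl (Fin u)))).trans e₄) (by
      intro a b
      ext x
      obtain ⟨⟨y, t⟩, rfl⟩ : ∃ p, e₄ p = x := ⟨e₄.symm x, by simp⟩
      simp [Equiv.Perm.mul_apply, mul_assoc])
  have hχ : ∀ (c : C), χ (φA c) = τ' c := by
    intro c
    ext x
    obtain ⟨⟨y, t⟩, rfl⟩ : ∃ p, e₄ p = x := ⟨e₄.symm x, by simp⟩
    simp only [χ, MonoidHom.mk'_apply, Equiv.trans_apply, Equiv.symm_apply_apply,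
      Equiv.prodCongr_apply, Equiv.coe_refl, Equiv.coe_mulLeft, Prod.map_apply, id_eq]
    exact congrArg Subtype.val (he₄ c y t)
  let F := Equiv.sumCompl P
  let σ : A →* Equiv.Perm X :=
    MonoidHom.mk' (fun a => (F.symm.trans ((Equiv.sumCongr (μ a) (χ a)).trans F))) (by
      intro a b
      ext x
      rcases hx : F.symm x with y | y <;>
        simp [Equiv.Perm.mul_apply, hx, map_mul])
  refine ⟨σ, ?_, ?_⟩
  · intro c
    ext x
    by_cases hx : P x
    · have hF : F.symm x = Sum.inl ⟨x, hx⟩ := by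
        simp [F, Equiv.sumCompl_symm_apply_of_pos hx]
      simp only [σ, MonoidHom.mk'_apply, Equiv.trans_apply, hF, Equiv.sumCongr_apply,
        Sum.map_inl]
      exact (hcompat c ⟨x, hx⟩).symm
    · have hF : F.symm x = Sum.inr ⟨x, hx⟩ := by
        simp [F, Equiv.sumCompl_symm_apply_of_neg hx]
      simp only [σ, MonoidHom.mk'_apply, Equiv.trans_apply, hF, Equiv.sumCongr_apply,
        Sum.map_inr, hχ]
      simp [F, τ', Equiv.Perm.subtypePerm_apply]
  · intro a x
    have hF : F.symm (↑x : X) = Sum.inl x := by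
      simp [F, Equiv.sumCompl_symm_apply_of_pos x.2]
    simp [σ, hF, F, μ]

section Words
open Monoid PushoutI PushoutI.NormalWord CoprodI

variable {ι : Type*} {G : ι → Type*} {H : Type*} [∀ i, Group (G i)] [Group H]
  {φ : ∀ i, H →* G i} {d : Transversal φ}
  [DecidableEq ι] [∀ i, DecidableEq (G i)]

theorem base_smul_toList (h : H) (w : NormalWord d) :
    ((base φ h • w).toList = w.toList) := by
  rw [base_smul_def]

theorem base_smul_fstIdx (h : H) (w : NormalWord d) :
    ((base φ h • w).fstIdx = w.fstIdx) := by
  rw [base_smul_def]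

theorem cons_length {i : ι} (g : G i) (w : NormalWord d) (hmw : w.fstIdx ≠ some i)
    (hgr : g ∉ (φ i).range) :
    (cons g w hmw hgr).toList.length = w.toList.length + 1 := by
  rw [cons_toList]
  rfl

theorem cons_fstIdx {i : ι} (g : G i) (w : NormalWord d) (hmw : w.fstIdx ≠ some i)
    (hgr : g ∉ (φ i).range) :
    (cons g w hmw hgr).fstIdx = some i := by
  simp [Word.fstIdx, cons_toList]

theorem keyA {i : ι} (a : G i) (w : NormalWord d) (hw : w.fstIdx ≠ some i) :
    ((of (φ := φ) i a • w).toList.length = w.toList.length ∧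
        (of (φ := φ) i a • w).fstIdx = w.fstIdx) ∨
      ((of (φ := φ) i a • w).toList.length = w.toList.length + 1 ∧
        (of (φ := φ) i a • w).fstIdx = some i) := by
  set w₁ : NormalWord d := ⟨w.toWord, 1, w.normalized⟩ with hw₁
  have hww : w = base φ w.head • w₁ := by
    apply NormalWord.ext
    · simp [base_smul_def, hw₁]
    · simp [base_smul_def, hw₁]
  have hsm : of (φ := φ) i a • w = of (φ := φ) i (a * φ i w.head) • w₁ := by
    conv_lhs => rw [hww]
    rw [smul_smul, ← of_apply_eq_base (φ := φ) i, ← map_mul]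
  have htl : w₁.toList = w.toList := rfl
  have hfi : w₁.fstIdx = w.fstIdx := rfl
  by_cases hb : a * φ i w.head ∈ (φ i).range
  · obtain ⟨c, hc⟩ := hb
    left
    rw [hsm, ← hc, of_apply_eq_base]
    rw [base_smul_toList, base_smul_fstIdx]
    exact ⟨congrArg List.length htl, hfi⟩
  · have hmw₁ : w₁.fstIdx ≠ some i := hw
    right
    rw [hsm, ← cons_eq_smul _ _ hmw₁ hb]
    rw [cons_length, cons_fstIdx]
    exact ⟨by rw [congrArg List.length htl], rfl⟩

theorem keyB {i : ι} (w : NormalWord d) :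
    ∀ (a : G i), w.fstIdx = some i →
    ((of (φ := φ) i a • w).toList.length + 1 = w.toList.length) ∨
      ((of (φ := φ) i a • w).toList.length = w.toList.length ∧
        (of (φ := φ) i a • w).fstIdx = some i) := by
  induction w using NormalWord.consRecOn with
  | empty =>
    intro a h
    simp [Word.fstIdx, NormalWord.empty] at h
  | cons j g w' hmw hgn hgr hw1 ih =>
    intro a h
    have hj : j = i := by
      rw [cons_fstIdx] at h
      simpa using h
    subst hj
    have hcw : of (φ := φ) j a • (cons g w' hmw hgr) = of (φ := φ) j (a * g) • w' := by
      rw [cons_eq_smul _ _ hmw hgr, smul_smul, ← map_mul]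
    rcases keyA (a * g) w' hmw with ⟨h1, h2⟩ | ⟨h1, h2⟩
    · left
      rw [hcw, h1, cons_length]
    · right
      rw [hcw, h1, cons_length]
      exact ⟨rfl, h2⟩
  | base h w' hw1 ih =>
    intro a hidx
    have hcw : of (φ := φ) i a • (base φ h • w') = of (φ := φ) i (a * φ i h) • w' := by
      rw [smul_smul, ← of_apply_eq_base (φ := φ) i, ← map_mul]
    have hidx' : w'.fstIdx = some i := by rwa [base_smul_fstIdx] at hidx
    have hL : (base φ h • w').toList.length = w'.toList.length := by
      rw [base_smul_toList]
    rw [hcw, hL]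
    exact ih (a * φ i h) hidx'

end Words

section Words2
open Monoid PushoutI PushoutI.NormalWord CoprodI

variable {ι : Type*} {G : ι → Type*} {H : Type*} [∀ i, Group (G i)] [Group H]
  {φ : ∀ i, H →* G i} {d : Transversal φ}
  [DecidableEq ι] [∀ i, DecidableEq (G i)]

theorem keyInv {n : ℕ} {i : ι} (a : G i) (w : NormalWord d)
    (h : w.toList.length ≤ n ∨ (w.toList.length = n + 1 ∧ w.fstIdx = some i)) :
    (of (φ := φ) i a • w).toList.length ≤ n ∨
      ((of (φ := φ) i a • w).toList.length = n + 1 ∧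
        (of (φ := φ) i a • w).fstIdx = some i) := by
  by_cases hI : w.fstIdx = some i
  · rcases keyB w a hI with h1 | ⟨h1, h2⟩
    · left
      rcases h with h3 | ⟨h3, _⟩ <;> omega
    · rcases h with h3 | ⟨h3, _⟩
      · left; omega
      · right; exact ⟨by omega, h2⟩
  · have h3 : w.toList.length ≤ n := by
      rcases h with h3 | ⟨_, h4⟩
      · exact h3
      · exact absurd h4 hI
    rcases keyA a w hI with ⟨h1, _⟩ | ⟨h1, h2⟩
    · left; omega
    · by_cases hn : w.toList.length = n
      · right; exact ⟨by omega, h2⟩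
      · left; omega

theorem free_of_smul {i : ι} (hφ : ∀ i, Function.Injective (φ i)) (a : G i) (w : NormalWord d)
    (h : of (φ := φ) i a • w = w) : a = 1 := by
  have h2 := congrArg NormalWord.prod h
  rw [prod_smul] at h2
  have h3 : of (φ := φ) i a = 1 := mul_eq_right.mp h2
  exact of_injective hφ i (by rw [h3, map_one])

theorem free_base_smul (hφ : ∀ i, Function.Injective (φ i)) (c : H) (w : NormalWord d)
    (h : base φ c • w = w) : c = 1 := by
  have h2 := congrArg NormalWord.prod h
  rw [prod_smul] at h2
  have h3 : base φ c = 1 := mul_eq_right.mp h2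
  exact base_injective hφ (by rw [h3, map_one])

theorem finite_words [Finite ι] [∀ i, Finite (G i)] [Finite H] (m : ℕ) :
    Finite {w : NormalWord d // w.toList.length ≤ m} := by
  have : Finite {l : List (Σ i, G i) | l.length ≤ m} := (List.finite_length_le _ m).to_subtype
  refine Finite.of_injective
    (fun w => ((w : NormalWord d).head,
      (⟨(w : NormalWord d).toList, w.2⟩ : {l : List (Σ i, G i) | l.length ≤ m}))) ?_
  rintro ⟨w₁, h₁⟩ ⟨w₂, h₂⟩ h
  simp only [Prod.mk.injEq, Subtype.mk.injEq] at h
  exact Subtype.ext (NormalWord.ext h.1 h.2)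

end Words2

open Monoid PushoutI PushoutI.NormalWord

/-- Baumslag: the amalgamated free product `A *_C B` of two finite groups
`A = K true` and `B = K false` over a common finite subgroup `C` (embedded via injective
homomorphisms `φ i : C →* K i`) is residually finite. -/
theorem amalgam_of_finite_groups_residuallyFinite
    (K : Bool → Type*) [∀ i, Group (K i)] [∀ i, Finite (K i)]
    (C : Type*) [Group C] [Finite C]
    (φ : ∀ i, C →* K i) (hφ : ∀ i, Function.Injective (φ i)) :
    ∀ g : Monoid.PushoutI φ, g ≠ 1 →
      ∃ (Q : Type) (_ : Group Q) (_ : Finite Q) (ψ : Monoid.PushoutI φ →* Q),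
        ψ g ≠ 1 := by
  classical
  intro g hg
  obtain ⟨d⟩ := transversal_nonempty φ hφ
  -- the normal word of `g` and its length
  set w₀ : NormalWord d := g • NormalWord.empty with hw₀def
  have hw₀ : w₀.prod = g := by rw [hw₀def, prod_smul, prod_empty, mul_one]
  set n : ℕ := w₀.toList.length with hn
  -- the finite set of normal words of length at most n+1
  let V := {w : NormalWord d // w.toList.length ≤ n + 1}
  haveI : Finite V := finite_words (n + 1)
  -- C acts on V by multiplication on the head
  have hVmem : ∀ (c : C) (w : NormalWord d), w.toList.length ≤ n + 1 →
      (base φ c • w).toList.length ≤ n + 1 := by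
    intro c w hw
    rw [base_smul_toList]; exact hw
  let τV : C →* Equiv.Perm V :=
    MonoidHom.mk' (fun c =>
      ⟨fun v => ⟨base φ c • v.1, hVmem c v.1 v.2⟩,
       fun v => ⟨base φ c⁻¹ • v.1, hVmem c⁻¹ v.1 v.2⟩,
       fun v => Subtype.ext (by
         simp only [smul_smul, ← map_mul, inv_mul_cancel, map_one, one_smul]),
       fun v => Subtype.ext (by
         simp only [smul_smul, ← map_mul, mul_inv_cancel, map_one, one_smul])⟩) (by
      intro a b
      refine Equiv.ext fun v => Subtype.ext ?_
      show base φ (a * b) • v.1 = base φ a • (base φ b • v.1)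
      rw [map_mul, mul_smul])
  have hτVfree : ∀ c v, τV c v = v → c = 1 := by
    intro c v h
    exact free_base_smul hφ c v.1 (congrArg Subtype.val h)
  obtain ⟨N', eV, heV⟩ := freeA τV hτVfree
  have cardV : Nat.card V = Nat.card C * N' := by
    rw [← Nat.card_congr eV, Nat.card_prod, Nat.card_eq_fintype_card (α := Fin N'),
      Fintype.card_fin]
  -- the padded finite set X
  set m : ℕ := Nat.card (K true) * Nat.card (K false) with hm
  set s : ℕ := N' * (m - 1) with hs
  let X := V ⊕ (C × Fin s)
  haveI : Finite X := inferInstance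
  -- the C-action on X
  let τ : C →* Equiv.Perm X :=
    MonoidHom.mk' (fun c => Equiv.sumCongr (τV c)
      (Equiv.prodCongr (Equiv.mulLeft c) (Equiv.refl (Fin s)))) (by
      intro a b
      ext x
      rcases x with v | ⟨c₀, t⟩
      · simp [Equiv.Perm.mul_apply, map_mul]
      · simp [Equiv.Perm.mul_apply, mul_assoc])
  -- the genuine region for each factor
  let P : Bool → X → Prop := fun i => Sum.elim
    (fun v => v.1.toList.length ≤ n ∨ (v.1.toList.length = n + 1 ∧ v.1.fstIdx = some i))
    (fun _ => False)
  let T : Bool → Type _ := fun i =>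
    {w : NormalWord d // w.toList.length ≤ n ∨ (w.toList.length = n + 1 ∧ w.fstIdx = some i)}
  let E : ∀ i : Bool, {x : X // P i x} ≃ T i := fun i =>
    { toFun := fun x => match x with
        | ⟨Sum.inl v, h⟩ => ⟨v.1, h⟩
        | ⟨Sum.inr _, h⟩ => h.elim
      invFun := fun w => ⟨Sum.inl ⟨w.1, by rcases w.2 with h | ⟨h, _⟩ <;> omega⟩, w.2⟩
      left_inv := by rintro ⟨v | p, h⟩
                     · rfl
                     · exact h.elim
      right_inv := by rintro ⟨w, h⟩; rfl }
  -- the genuine action of `K i` on `T i`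
  let μ' : ∀ i : Bool, K i →* Equiv.Perm (T i) := fun i =>
    MonoidHom.mk' (fun a =>
      ⟨fun w => ⟨of (φ := φ) i a • w.1, keyInv a w.1 w.2⟩,
       fun w => ⟨of (φ := φ) i a⁻¹ • w.1, keyInv a⁻¹ w.1 w.2⟩,
       fun w => Subtype.ext (by
         simp only [smul_smul, ← map_mul, inv_mul_cancel, map_one, one_smul]),
       fun w => Subtype.ext (by
         simp only [smul_smul, ← map_mul, mul_inv_cancel, map_one, one_smul])⟩) (by
      intro a b
      refine Equiv.ext fun w => Subtype.ext ?_
      show of (φ := φ) i (a * b) • w.1 = of (φ := φ) i a • (of (φ := φ) i b • w.1)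
      rw [map_mul, mul_smul])
  -- apply the extension lemma to each factor
  have EX : ∀ i : Bool, ∃ σ : K i →* Equiv.Perm X, (∀ c, σ (φ i c) = τ c) ∧
      ∀ (a : K i) (x : {x : X // P i x}), σ a ↑x = ↑((E i).symm (μ' i a ((E i) x))) := by
    intro i
    refine main_ext (φ i) (hφ i) (P i) (E i) (μ' i) τ ?_ ?_ ?_ ?_ ?_
    · -- τ preserves P i
      rintro c (v | p) hx
      · show P i (Sum.inl (τV c v))
        rcases hx with h | ⟨h, h2⟩
        · left
          show (base φ c • v.1).toList.length ≤ n
          rw [base_smul_toList]; exact h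
        · right
          refine ⟨?_, ?_⟩
          · show (base φ c • v.1).toList.length = n + 1
            rw [base_smul_toList]; exact h
          · show (base φ c • v.1).fstIdx = some i
            rw [base_smul_fstIdx]; exact h2
      · exact hx.elim
    · -- compatibility on the genuine region
      rintro c ⟨v | p, hx⟩
      · show Sum.inl (τV c v) = _
        exact congrArg Sum.inl (Subtype.ext (by
          show base φ c • v.1 = of (φ := φ) i (φ i c) • v.1
          rw [of_apply_eq_base]))
      · exact hx.elim
    · -- freeness of μ'
      intro a t ht
      exact free_of_smul hφ a t.1 (congrArg Subtype.val ht)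
    · -- freeness of τ off the genuine region
      rintro c (v | ⟨c₀, t⟩) hx hfix
      · have : τV c v = v := Sum.inl.inj hfix
        exact free_base_smul hφ c v.1 (congrArg Subtype.val this)
      · have : (c * c₀, t) = (c₀, t) := Sum.inr.inj hfix
        exact mul_eq_right.mp (congrArg Prod.fst this)
    · -- divisibility
      have hmpos : 1 ≤ m := by
        rw [hm]
        exact Nat.one_le_iff_ne_zero.mpr (Nat.mul_ne_zero Nat.card_pos.ne' Nat.card_pos.ne')
      have hcard : Nat.card X = Nat.card C * (N' * m) := by
        have h1 : Nat.card X = Nat.card V + Nat.card C * s := by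
          rw [Nat.card_sum, Nat.card_prod, Nat.card_eq_fintype_card (α := Fin s),
            Fintype.card_fin]
        have h2 : N' * (m - 1) = N' * m - N' := by rw [Nat.mul_sub, mul_one]
        have h3 : N' ≤ N' * m := Nat.le_mul_of_pos_right N' (by omega)
        rw [h1, cardV, hs, h2, ← Nat.mul_add]
        congr 1
        omega
      rw [hcard]
      have hdvd : Nat.card (K i) ∣ m := by
        rw [hm]
        cases i
        · exact dvd_mul_left _ _
        · exact dvd_mul_right _ _
      exact Dvd.dvd.mul_left (hdvd.mul_left N') (Nat.card C)
  choose σ hσ1 hσ2 using EX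
  -- the homomorphism out of the pushout
  let ψ : PushoutI φ →* Equiv.Perm X :=
    PushoutI.lift σ τ (fun i => DFunLike.ext _ _ (hσ1 i))
  have hx₀len : (NormalWord.empty : NormalWord d).toList.length ≤ n + 1 := by
    simp [NormalWord.empty]
  let x₀ : X := Sum.inl ⟨NormalWord.empty, hx₀len⟩
  -- the main computation: ψ moves x₀ correctly along words of length at most n
  have chain : ∀ w : NormalWord d, ∀ (_ : w.toList.length ≤ n)
      (h2 : w.toList.length ≤ n + 1), ψ w.prod x₀ = Sum.inl ⟨w, h2⟩ := by
    intro w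
    induction w using NormalWord.consRecOn with
    | empty =>
      intro h1 h2
      rw [prod_empty, map_one]
      rfl
    | cons i gg w' hmw hgn hgr hw1 ih =>
      intro h1 h2
      have hlc := cons_length gg w' hmw hgr
      have h1' : w'.toList.length ≤ n := by omega
      have pf' : w'.toList.length ≤ n + 1 := by omega
      rw [prod_cons, map_mul, Equiv.Perm.mul_apply, ih h1' pf']
      have hψof : ψ (of (φ := φ) i gg) = σ i gg := by
        simp [ψ, PushoutI.lift_of]
      rw [hψof]
      calc σ i gg (Sum.inl ⟨w', pf'⟩)
          = ↑((E i).symm (μ' i gg ((E i) ⟨Sum.inl ⟨w', pf'⟩, Or.inl h1'⟩))) :=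
            hσ2 i gg ⟨Sum.inl ⟨w', pf'⟩, Or.inl h1'⟩
        _ = Sum.inl ⟨cons gg w' hmw hgr, h2⟩ := by
            exact congrArg Sum.inl (Subtype.ext (cons_eq_smul gg w' hmw hgr).symm)
    | base c w' hw1 ih =>
      intro h1 h2
      have hL : (base φ c • w').toList.length = w'.toList.length :=
        congrArg List.length (base_smul_toList c w')
      have h1' : w'.toList.length ≤ n := by omega
      have pf' : w'.toList.length ≤ n + 1 := by omega
      rw [prod_smul, map_mul, Equiv.Perm.mul_apply, ih h1' pf']
      have hψb : ψ (base φ c) = τ c := by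
        simp [ψ, PushoutI.lift_base]
      rw [hψb]
      exact congrArg Sum.inl (Subtype.ext rfl)
  -- ψ moves x₀
  have hmove : ψ g x₀ = Sum.inl ⟨w₀, Nat.le_succ_of_le le_rfl⟩ := by
    rw [← hw₀]
    exact chain w₀ le_rfl (Nat.le_succ_of_le le_rfl)
  have hne : ψ g x₀ ≠ x₀ := by
    rw [hmove]
    intro h
    apply hg
    have h3 : w₀ = NormalWord.empty := by
      have := Sum.inl.inj h.symm
      exact (Subtype.ext_iff.mp this).symm
    rw [← hw₀, h3, prod_empty]
  -- shrink the universe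
  obtain ⟨q, ⟨eX⟩⟩ := Finite.exists_equiv_fin X
  let homPC : Equiv.Perm X →* Equiv.Perm (Fin q) :=
    MonoidHom.mk' (fun p => (eX.symm.trans p).trans eX) (by
      intro a b
      ext t
      simp [Equiv.Perm.mul_apply])
  refine ⟨Equiv.Perm (Fin q), inferInstance, inferInstance, homPC.comp ψ, ?_⟩
  intro h1
  apply hne
  have h2 := congrArg (fun (p : Equiv.Perm (Fin q)) => eX.symm (p (eX x₀))) h1
  simpa [homPC] using h2
end

section
/- Let Γ be a finite connected cubic edge-transitive graph that is not a cycle, and suppose every edge of Γ lies on a cycle. Then the induced action of Aut(Γ) on the first homology group H₁(Γ; ℤ) is faithful. -/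
open SimpleGraph

variable {V : Type*}

noncomputable def arcReversalRelations (Γ : SimpleGraph V) : Submodule ℤ (Γ.Dart →₀ ℤ) :=
  Submodule.span ℤ {m | ∃ d : Γ.Dart, m = Finsupp.single d 1 + Finsupp.single d.symm 1}

noncomputable def homologyClass (Γ : SimpleGraph V) {u : V} (w : Γ.Walk u u) :
    (Γ.Dart →₀ ℤ) ⧸ arcReversalRelations Γ :=
  Submodule.Quotient.mk ((w.darts.map (fun d => Finsupp.single d (1 : ℤ))).sum)

namespace AutFaithfulAux

variable {Γ : SimpleGraph V}

/-- The linear functional on the free module on darts measuring the (signed) coefficient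
of a dart. -/
noncomputable def dartCoeff (Γ : SimpleGraph V) (d : Γ.Dart) : (Γ.Dart →₀ ℤ) →ₗ[ℤ] ℤ :=
  Finsupp.lapply d - Finsupp.lapply d.symm

lemma dartCoeff_single [DecidableEq Γ.Dart] (d e : Γ.Dart) :
    dartCoeff Γ d (Finsupp.single e 1) =
      (if e = d then (1 : ℤ) else 0) - (if e = d.symm then (1 : ℤ) else 0) := by
  classical
  simp [dartCoeff, Finsupp.single_apply]

lemma dartCoeff_rel (d : Γ.Dart) :
    arcReversalRelations Γ ≤ LinearMap.ker (dartCoeff Γ d) := by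
  classical
  rw [arcReversalRelations, Submodule.span_le]
  rintro m ⟨e, rfl⟩
  simp only [SetLike.mem_coe, LinearMap.mem_ker, map_add, dartCoeff_single]
  have h1 : (e.symm = d.symm) ↔ (e = d) :=
    ⟨fun h => by
      have := congrArg SimpleGraph.Dart.symm h
      simpa [SimpleGraph.Dart.symm_symm] using this, fun h => by rw [h]⟩
  have h2 : (e.symm = d) ↔ (e = d.symm) :=
    ⟨fun h => by rw [← h, SimpleGraph.Dart.symm_symm], fun h => by
      rw [h, SimpleGraph.Dart.symm_symm]⟩
  simp only [h1, h2]
  split_ifs <;> omega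

/-- The induced functional on the quotient. -/
noncomputable def dartCoeffQ (Γ : SimpleGraph V) (d : Γ.Dart) :
    ((Γ.Dart →₀ ℤ) ⧸ arcReversalRelations Γ) →ₗ[ℤ] ℤ :=
  Submodule.liftQ _ (dartCoeff Γ d) (dartCoeff_rel d)

lemma sum_ite_count {α : Type*} [DecidableEq α] (d : α) (L : List α) :
    (L.map (fun x => if x = d then (1 : ℤ) else 0)).sum = L.count d := by
  induction L with
  | nil => simp
  | cons a t ih =>
    by_cases h : a = d
    · simp [List.count_cons, h, ih]; push_cast; ring
    · simp [List.count_cons, h, ih]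

lemma sum_map_sub {α : Type*} (L : List α) (f h : α → ℤ) :
    (L.map (fun x => f x - h x)).sum = (L.map f).sum - (L.map h).sum := by
  induction L with
  | nil => simp
  | cons a t ih => simp [ih]; ring

lemma dartCoeffQ_homologyClass [DecidableEq Γ.Dart] {u : V} (w : Γ.Walk u u) (d : Γ.Dart) :
    dartCoeffQ Γ d (homologyClass Γ w) =
      (w.darts.count d : ℤ) - (w.darts.count d.symm : ℤ) := by
  show dartCoeffQ Γ d (Submodule.Quotient.mk _) = _
  rw [dartCoeffQ, Submodule.liftQ_apply, map_list_sum, List.map_map]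
  have : (dartCoeff Γ d) ∘ (fun e => Finsupp.single e (1 : ℤ)) =
      fun e => (if e = d then (1 : ℤ) else 0) - (if e = d.symm then (1 : ℤ) else 0) := by
    funext e; exact dartCoeff_single d e
  rw [this, sum_map_sub, sum_ite_count, sum_ite_count]

lemma mem_darts_iff_coeff_one {u : V} {w : Γ.Walk u u} (hw : w.IsTrail) (d : Γ.Dart) :
    d ∈ w.darts ↔ dartCoeffQ Γ d (homologyClass Γ w) = 1 := by
  classical
  rw [dartCoeffQ_homologyClass]
  have hmapnodup : (w.darts.map SimpleGraph.Dart.edge).Nodup := by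
    have := hw.edges_nodup
    rwa [SimpleGraph.Walk.edges] at this
  have hnodup : w.darts.Nodup := List.Nodup.of_map _ hmapnodup
  have hinj := List.inj_on_of_nodup_map hmapnodup
  constructor
  · intro hd
    have h1 : w.darts.count d = 1 := List.count_eq_one_of_mem hnodup hd
    have h2 : w.darts.count d.symm = 0 := by
      rw [List.count_eq_zero]
      intro hs
      exact SimpleGraph.Dart.symm_ne d (hinj hs hd (SimpleGraph.Dart.edge_symm d))
    rw [h1, h2]; norm_num
  · intro h
    have h2 : w.darts.count d ≠ 0 := by
      intro h0
      rw [h0] at h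
      have : (0 : ℤ) ≤ (w.darts.count d.symm : ℤ) := Int.natCast_nonneg _
      omega
    exact List.count_pos_iff.mp (Nat.pos_of_ne_zero h2)

/-- Key consequence of `hfix`: the automorphism preserves the dart set of every cycle. -/
lemma mapDart_mem_darts (g : Γ ≃g Γ)
    (hfix : ∀ (u : V) (w : Γ.Walk u u), w.IsCycle →
      homologyClass Γ (w.map g.toHom) = homologyClass Γ w)
    {u : V} {w : Γ.Walk u u} (hw : w.IsCycle) {d : Γ.Dart} (hd : d ∈ w.darts) :
    g.toHom.mapDart d ∈ w.darts := by
  classical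
  have hinj : Function.Injective (g.toHom : V → V) := g.toEquiv.injective
  have hmap : (w.map g.toHom).IsCycle :=
    (SimpleGraph.Walk.map_isCycle_iff_of_injective hinj).mpr hw
  have hd' : g.toHom.mapDart d ∈ (w.map g.toHom).darts := by
    rw [SimpleGraph.Walk.darts_map]
    exact List.mem_map_of_mem hd
  have h1 := (mem_darts_iff_coeff_one hmap.isCircuit.isTrail _).mp hd'
  rw [hfix u w hw] at h1
  exact (mem_darts_iff_coeff_one hw.isCircuit.isTrail _).mpr h1

lemma getLast_not_mem_dropLast {α : Type*} (l : List α) (hnd : l.Nodup) (h : l ≠ []) :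
    l.getLast h ∉ l.dropLast := by
  intro hmem
  have heq := List.dropLast_append_getLast h
  rw [← heq, List.nodup_append] at hnd
  exact hnd.2.2 _ hmem _ (List.mem_singleton_self _) rfl

lemma end_mem_support_tail {u v : V} (w : Γ.Walk u v) (h : ¬ w.Nil) :
    v ∈ w.support.tail := by
  cases w with
  | nil => simp at h
  | cons ha q => simpa using q.end_mem_support

lemma dropLast_support_nodup {v : V} {w : Γ.Walk v v} (hw : w.IsCycle) :
    w.support.dropLast.Nodup := by
  have htail : w.support.tail.Nodup := hw.support_nodup
  have hne : w.support.tail ≠ [] := by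
    intro h
    have h3 := hw.three_le_length
    have hl : w.support.length = w.length + 1 := w.length_support
    rw [w.support_eq_cons, h] at hl
    simp only [List.length_cons, List.length_nil] at hl
    omega
  have hlast : w.support.tail.getLast hne = v := by
    rw [List.getLast_tail]
    exact w.getLast_support
  rw [w.support_eq_cons]
  rw [List.dropLast_cons_of_ne_nil hne]
  refine List.nodup_cons.mpr ⟨?_, htail.sublist (List.dropLast_sublist _)⟩
  intro hv
  have hnm := getLast_not_mem_dropLast _ htail hne
  rw [hlast] at hnm
  exact hnm hv

lemma darts_fst_inj {u v : V} {w : Γ.Walk u v} (h : w.support.dropLast.Nodup)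
    {d₁ d₂ : Γ.Dart} (h₁ : d₁ ∈ w.darts) (h₂ : d₂ ∈ w.darts) (hf : d₁.fst = d₂.fst) :
    d₁ = d₂ := by
  have hnd : (w.darts.map (·.fst)).Nodup := by
    rw [SimpleGraph.Walk.map_fst_darts]; exact h
  exact List.inj_on_of_nodup_map hnd h₁ h₂ hf

lemma darts_snd_inj {u v : V} {w : Γ.Walk u v} (h : w.support.tail.Nodup)
    {d₁ d₂ : Γ.Dart} (h₁ : d₁ ∈ w.darts) (h₂ : d₂ ∈ w.darts) (hf : d₁.snd = d₂.snd) :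
    d₁ = d₂ := by
  have hnd : (w.darts.map (·.snd)).Nodup := by
    rw [SimpleGraph.Walk.map_snd_darts]; exact h
  exact List.inj_on_of_nodup_map hnd h₁ h₂ hf

lemma exists_cons_of_ne {u v : V} (w : Γ.Walk u v) (h : u ≠ v) :
    ∃ (x : V) (ha : Γ.Adj u x) (q : Γ.Walk x v), w = SimpleGraph.Walk.cons ha q := by
  cases w with
  | nil => exact absurd rfl h
  | cons ha q => exact ⟨_, ha, q, rfl⟩

lemma dart_edge_eq (d : Γ.Dart) : d.edge = s(d.fst, d.snd) := rfl

lemma cycle_anatomy {v : V} {C : Γ.Walk v v} (hC : C.IsCycle) :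
    ∃ (x y : V) (hx : Γ.Adj v x) (hy : Γ.Adj v y) (p : Γ.Walk x v) (r : Γ.Walk y x),
      C = SimpleGraph.Walk.cons hx p ∧ p.reverse = SimpleGraph.Walk.cons hy r ∧
      p.IsPath ∧ r.IsPath ∧ v ∉ r.support ∧ x ≠ y ∧
      (∀ m, s(v, m) ∈ C.edges → m = x ∨ m = y) := by
  classical
  obtain ⟨x, hx, p, rfl⟩ : ∃ (x : V) (hx : Γ.Adj v x) (p : Γ.Walk x v),
      C = SimpleGraph.Walk.cons hx p := by
    cases C with
    | nil => exact absurd rfl hC.ne_nil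
    | cons ha q => exact ⟨_, ha, q, rfl⟩
  set C := SimpleGraph.Walk.cons hx p with hCdef
  have hp : p.IsPath := ((SimpleGraph.Walk.cons_isCycle_iff p hx).mp hC).1
  obtain ⟨y, hy, r, hrev⟩ := exists_cons_of_ne p.reverse hx.ne
  have hrp : p.reverse.IsPath := hp.reverse
  have hvr : v ∉ r.support := by
    have := hrp.support_nodup
    rw [hrev, SimpleGraph.Walk.support_cons] at this
    exact (List.nodup_cons.mp this).1
  -- the two special darts
  set d₀ : Γ.Dart := ⟨(v, x), hx⟩ with hd₀def
  set d₁ : Γ.Dart := ⟨(y, v), hy.symm⟩ with hd₁def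
  have hd₀ : d₀ ∈ C.darts := by
    rw [hCdef, SimpleGraph.Walk.darts_cons]
    exact List.mem_cons_self
  have hd₁ : d₁ ∈ C.darts := by
    have hmem : (⟨(v, y), hy⟩ : Γ.Dart) ∈ p.reverse.darts := by
      rw [hrev, SimpleGraph.Walk.darts_cons]
      exact List.mem_cons_self
    have := SimpleGraph.Walk.mem_darts_reverse.mp hmem
    have hsymm : (⟨(v, y), hy⟩ : Γ.Dart).symm = d₁ := rfl
    rw [hsymm] at this
    rw [hCdef, SimpleGraph.Walk.darts_cons]
    exact List.mem_cons_of_mem _ this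
  have hmapnodup : (C.darts.map SimpleGraph.Dart.edge).Nodup := by
    have := hC.isCircuit.isTrail.edges_nodup
    rwa [SimpleGraph.Walk.edges] at this
  have hedgeinj := List.inj_on_of_nodup_map hmapnodup
  have hxy : x ≠ y := by
    intro hxyeq
    have hedge : d₀.edge = d₁.edge := by
      rw [dart_edge_eq, dart_edge_eq]
      show s(v, x) = s(y, v)
      rw [hxyeq, Sym2.eq_swap]
    have := hedgeinj hd₀ hd₁ hedge
    have hvy : v = y := congrArg (fun d : Γ.Dart => d.fst) this
    exact hy.ne hvy
  have hr : r.IsPath := by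
    have h' := hrp
    rw [hrev] at h'
    exact h'.of_cons
  refine ⟨x, y, hx, hy, p, r, rfl, hrev, hp, hr, hvr, hxy, ?_⟩
  intro m hm
  rw [SimpleGraph.Walk.edges] at hm
  obtain ⟨d, hd, hde⟩ := List.mem_map.mp hm
  rw [dart_edge_eq] at hde
  rcases Sym2.eq_iff.mp hde with ⟨hfst, hsnd⟩ | ⟨hfst, hsnd⟩
  · left
    have : d = d₀ := darts_fst_inj (dropLast_support_nodup hC) hd hd₀ (by rw [hfst])
    rw [← hsnd, this]
  · right
    have : d = d₁ := darts_snd_inj hC.support_nodup hd hd₁ (by rw [hsnd])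
    rw [← hfst, this]

lemma exists_escape_path [DecidableEq V]
    (hcyc : ∀ e ∈ Γ.edgeSet, ∃ (u : V) (w : Γ.Walk u u), w.IsCycle ∧ e ∈ w.edges)
    {v c : V} (hvc : Γ.Adj v c) :
    ∃ (y : V) (P : Γ.Walk c y), P.IsPath ∧ Γ.Adj v y ∧ y ≠ c ∧ v ∉ P.support := by
  obtain ⟨u, w0, hw0, he0⟩ := hcyc s(v, c) (Γ.mem_edgeSet.mpr hvc)
  have hv0 : v ∈ w0.support := w0.fst_mem_support_of_mem_edges he0
  have hC : (w0.rotate v hv0).IsCycle := hw0.rotate hv0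
  have heC : s(v, c) ∈ (w0.rotate v hv0).edges :=
    (w0.rotate_edges v hv0).perm.mem_iff.mpr he0
  obtain ⟨x, y, hx, hy, p, r, hCeq, hrev, hp, hr, hvr, hxy, hat⟩ := cycle_anatomy hC
  rcases hat c heC with rfl | rfl
  · refine ⟨y, r.reverse, hr.reverse, hy, fun h => hxy h.symm, ?_⟩
    rw [SimpleGraph.Walk.support_reverse, List.mem_reverse]
    exact hvr
  · exact ⟨x, r, hr, hx, fun h => hxy h, hvr⟩

lemma exists_first_hit {a b : V} (w : Γ.Walk a b) (S : Set V) (hb : b ∈ S) :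
    ∃ (z : V) (w₁ : Γ.Walk a z) (w₂ : Γ.Walk z b),
      w = w₁.append w₂ ∧ z ∈ S ∧ ∀ u ∈ w₁.support, u ≠ z → u ∉ S := by
  classical
  induction w with
  | nil =>
    refine ⟨_, SimpleGraph.Walk.nil, SimpleGraph.Walk.nil, rfl, hb, ?_⟩
    intro u hu hne
    simp only [SimpleGraph.Walk.support_nil, List.mem_singleton] at hu
    exact absurd hu hne
  | cons ha q ih =>
    rename_i u x b'
    by_cases hu : u ∈ S
    · refine ⟨u, SimpleGraph.Walk.nil, SimpleGraph.Walk.cons ha q, rfl, hu, ?_⟩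
      intro t ht hne
      simp only [SimpleGraph.Walk.support_nil, List.mem_singleton] at ht
      exact absurd ht hne
    · obtain ⟨z, w₁, w₂, heq, hz, hw₁⟩ := ih hb
      refine ⟨z, SimpleGraph.Walk.cons ha w₁, w₂, ?_, hz, ?_⟩
      · rw [SimpleGraph.Walk.cons_append, ← heq]
      · intro t ht hne
        rw [SimpleGraph.Walk.support_cons] at ht
        rcases List.mem_cons.mp ht with rfl | ht
        · exact hu
        · exact hw₁ t ht hne

lemma exists_third [Fintype V] [DecidableRel Γ.Adj] {v x y : V} (hdeg : Γ.degree v = 3)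
    (hx : Γ.Adj v x) (hy : Γ.Adj v y) :
    ∃ c, Γ.Adj v c ∧ c ≠ x ∧ c ≠ y := by
  classical
  by_contra h
  push_neg at h
  have hsub : Γ.neighborFinset v ⊆ {x, y} := by
    intro c hc
    rw [SimpleGraph.mem_neighborFinset] at hc
    by_cases hcx : c = x
    · simp [hcx]
    · have := h c hc hcx
      simp [this]
  have hle := Finset.card_le_card hsub
  have hcard : (Γ.neighborFinset v).card = 3 := hdeg
  have h2 : ({x, y} : Finset V).card ≤ 2 :=
    (Finset.card_insert_le _ _).trans (by simp)
  omega

lemma neighbor_eq_of_degree_three [Fintype V] [DecidableRel Γ.Adj] {v x y c : V}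
    (hdeg : Γ.degree v = 3) (hx : Γ.Adj v x) (hy : Γ.Adj v y) (hc : Γ.Adj v c)
    (hxy : x ≠ y) (hcx : c ≠ x) (hcy : c ≠ y) {m : V} (hm : Γ.Adj v m) :
    m = x ∨ m = y ∨ m = c := by
  classical
  by_contra h
  push_neg at h
  obtain ⟨hmx, hmy, hmc⟩ := h
  have hsub : ({m, x, y, c} : Finset V) ⊆ Γ.neighborFinset v := by
    intro t ht
    rw [SimpleGraph.mem_neighborFinset]
    simp only [Finset.mem_insert, Finset.mem_singleton] at ht
    rcases ht with rfl | rfl | rfl | rfl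
    · exact hm
    · exact hx
    · exact hy
    · exact hc
  have hcard4 : ({m, x, y, c} : Finset V).card = 4 := by
    rw [Finset.card_insert_of_notMem (by
          simp only [Finset.mem_insert, Finset.mem_singleton]
          push_neg
          exact ⟨hmx, hmy, hmc⟩),
        Finset.card_insert_of_notMem (by
          simp only [Finset.mem_insert, Finset.mem_singleton]
          push_neg
          exact ⟨hxy, fun h => hcx h.symm⟩),
        Finset.card_insert_of_notMem (by
          simp only [Finset.mem_singleton]
          exact fun h => hcy h.symm),
        Finset.card_singleton]
  have hle := Finset.card_le_card hsub
  have hcard : (Γ.neighborFinset v).card = 3 := hdeg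
  omega

lemma list_shift_fixed {α β : Type*} (F : α → α) (gg : β → β) (pfst psnd : α → β)
    (z : β) (L : List α) (hn : 0 < L.length)
    (hinv : ∀ d ∈ L, F d ∈ L)
    (hchain : ∀ (i : ℕ) (h : i + 1 < L.length), psnd (L[i]'(by omega)) = pfst (L[i+1]'h))
    (hfstinj : ∀ x ∈ L, ∀ y ∈ L, pfst x = pfst y → x = y)
    (hfstz : ∀ d ∈ L, pfst d ≠ z)
    (hsndz : psnd (L[L.length-1]'(by omega)) = z)
    (hFf : ∀ d, pfst (F d) = gg (pfst d))
    (hFs : ∀ d, psnd (F d) = gg (psnd d)) :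
    F (L[0]'hn) = L[0]'hn := by
  have hstep : ∀ (i : ℕ) (hi : i + 1 < L.length) (j : ℕ) (hj : j < L.length),
      F (L[i]'(by omega)) = L[j]'hj →
      ∃ (hj1 : j + 1 < L.length), F (L[i+1]'hi) = L[j+1]'hj1 := by
    intro i hi j hj heq
    have hmem1 : F (L[i+1]'hi) ∈ L := hinv _ (List.getElem_mem hi)
    have hfst1 : pfst (F (L[i+1]'hi)) = psnd (L[j]'hj) := by
      rw [hFf, ← hchain i hi, ← heq, hFs]
    have hj1 : j + 1 < L.length := by
      rcases Nat.lt_or_ge (j+1) L.length with h | h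
      · exact h
      · exfalso
        have hjeq : j = L.length - 1 := by omega
        have hz : psnd (L[j]'hj) = z := by
          subst hjeq
          exact hsndz
        rw [hz] at hfst1
        exact hfstz _ hmem1 hfst1
    refine ⟨hj1, ?_⟩
    have hfst2 : pfst (F (L[i+1]'hi)) = pfst (L[j+1]'hj1) := by
      rw [hfst1]
      exact hchain j hj1
    exact hfstinj _ hmem1 _ (List.getElem_mem hj1) hfst2
  obtain ⟨j₀, hj₀lt, hj₀⟩ : ∃ (j : ℕ) (hj : j < L.length),
      F (L[0]'hn) = L[j]'hj := by
    have hmem := hinv _ (List.getElem_mem hn)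
    obtain ⟨j, hj, hjeq⟩ := List.mem_iff_getElem.mp hmem
    exact ⟨j, hj, hjeq.symm⟩
  have hall : ∀ (i : ℕ) (hi : i < L.length), ∃ (hlt : j₀ + i < L.length),
      F (L[i]'hi) = L[j₀+i]'hlt := by
    intro i
    induction i with
    | zero => intro hi; exact ⟨by omega, hj₀⟩
    | succ k ih =>
      intro hi
      obtain ⟨hlt, heq⟩ := ih (by omega)
      exact hstep k hi _ hlt heq
  obtain ⟨hlt, _⟩ := hall (L.length - 1) (by omega)
  have hj₀0 : j₀ = 0 := by omega
  subst hj₀0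
  exact hj₀

lemma fixed_of_invariant_path (g : Γ ≃g Γ) {v z : V} {Q : Γ.Walk v z} (hQ : Q.IsPath)
    (hvz : v ≠ z)
    (hinv : ∀ d ∈ Q.darts, g.toHom.mapDart d ∈ Q.darts) :
    g.toHom v = v := by
  classical
  have hn : 0 < Q.darts.length := by
    rw [SimpleGraph.Walk.length_darts]
    by_contra h
    push_neg at h
    exact hvz (Q.eq_of_length_eq_zero (by omega))
  have hchain : ∀ (i : ℕ) (h : i + 1 < Q.darts.length),
      (Q.darts[i]'(by omega)).snd = (Q.darts[i+1]'h).fst := by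
    intro i h
    exact List.isChain_iff_getElem.mp (SimpleGraph.Walk.isChain_dartAdj_darts Q) i (by omega)
  have hfstnodup : (Q.darts.map (·.fst)).Nodup := by
    rw [SimpleGraph.Walk.map_fst_darts]
    exact hQ.support_nodup.sublist (List.dropLast_sublist _)
  have hfstinj' := List.inj_on_of_nodup_map hfstnodup
  have hfstz : ∀ d ∈ Q.darts, d.fst ≠ z := by
    intro d hd hdz
    have hmem : d.fst ∈ Q.support.dropLast := by
      rw [← SimpleGraph.Walk.map_fst_darts]
      exact List.mem_map_of_mem hd
    have hznd := getLast_not_mem_dropLast Q.support hQ.support_nodup Q.support_ne_nil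
    rw [Q.getLast_support] at hznd
    rw [hdz] at hmem
    exact hznd hmem
  have hdne : Q.darts ≠ [] := by
    intro h
    rw [h] at hn
    simp at hn
  have hsndz : (Q.darts[Q.darts.length-1]'(by omega)).snd = z := by
    have h1 : (Q.darts.getLast hdne).snd = z := by simp
    rwa [List.getLast_eq_getElem] at h1
  have hkey := list_shift_fixed (g.toHom.mapDart) (g.toHom)
      (fun d : Γ.Dart => d.fst) (fun d : Γ.Dart => d.snd) z Q.darts hn hinv hchain
      (fun x hx y hy h => hfstinj' hx hy h) hfstz hsndz (fun d => rfl) (fun d => rfl)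
  have hfstv : (Q.darts[0]'hn).fst = v := by
    have h1 : (Q.darts.head hdne).fst = v := by simp
    rwa [List.head_eq_getElem] at h1
  calc g.toHom v = g.toHom ((Q.darts[0]'hn).fst) := by rw [hfstv]
    _ = (g.toHom.mapDart (Q.darts[0]'hn)).fst := rfl
    _ = (Q.darts[0]'hn).fst := by rw [hkey]
    _ = v := hfstv

lemma not_nil_of_ne' {u v : V} (w : Γ.Walk u v) (h : u ≠ v) : ¬ w.Nil :=
  SimpleGraph.Walk.not_nil_of_ne h

end AutFaithfulAux

open AutFaithfulAux in
/-- For a finite connected cubic edge-transitive graph in which every edge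
lies on a cycle, the action of the automorphism group on the first homology group
H₁(Γ; ℤ) is faithful: any automorphism fixing the homology class of every cycle is
the identity. -/
theorem aut_faithful_on_first_homology
    [Fintype V] (Γ : SimpleGraph V) [DecidableRel Γ.Adj]
    (hconn : Γ.Connected)
    (hcubic : ∀ v : V, Γ.degree v = 3)
    (hedge : ∀ e₁ e₂ : Sym2 V, e₁ ∈ Γ.edgeSet → e₂ ∈ Γ.edgeSet →
      ∃ g : Γ ≃g Γ, Sym2.map g e₁ = e₂)
    (hcyc : ∀ e ∈ Γ.edgeSet, ∃ (u : V) (w : Γ.Walk u u), w.IsCycle ∧ e ∈ w.edges)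
    (g : Γ ≃g Γ)
    (hfix : ∀ (u : V) (w : Γ.Walk u u), w.IsCycle →
      homologyClass Γ (w.map g.toHom) = homologyClass Γ w) :
    ∀ v : V, g v = v := by
  classical
  intro v
  -- a neighbor of v
  have hdeg := hcubic v
  obtain ⟨a, hva⟩ : ∃ a, Γ.Adj v a := by
    have hpos : 0 < (Γ.neighborFinset v).card := by
      have hcard : (Γ.neighborFinset v).card = 3 := hdeg
      omega
    obtain ⟨a, ha⟩ := Finset.card_pos.mp hpos
    exact ⟨a, (SimpleGraph.mem_neighborFinset Γ v a).mp ha⟩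
  -- a cycle through v
  obtain ⟨u0, w0, hw0, he0⟩ := hcyc s(v, a) (Γ.mem_edgeSet.mpr hva)
  have hv0 : v ∈ w0.support := w0.fst_mem_support_of_mem_edges he0
  have hC : (w0.rotate v hv0).IsCycle := hw0.rotate hv0
  set C := w0.rotate v hv0 with hCdef
  obtain ⟨x, y, hx, hy, p, r, hCeq, hrev, hppath, hrpath, hvr, hxy, hat⟩ := cycle_anatomy hC
  -- the third neighbor of v
  obtain ⟨c, hvc, hcx, hcy⟩ := exists_third hdeg hx hy
  -- the escape path from c
  obtain ⟨y', P, hP, hvy', hy'c, hvP⟩ := exists_escape_path hcyc hvc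
  set P' := P.concat hvy'.symm with hP'def
  have hP'path : P'.IsPath := by
    rw [SimpleGraph.Walk.isPath_def, hP'def, SimpleGraph.Walk.support_concat,
      List.nodup_append]
    refine ⟨hP.support_nodup, List.nodup_singleton _, ?_⟩
    intro t ht t' htv heq
    rw [List.mem_singleton] at htv
    subst htv
    exact hvP (heq ▸ ht)
  -- first hit of the cycle support
  have hvS : v ∈ {w | w ∈ C.support} := C.start_mem_support
  obtain ⟨z, W₁, W₂, hsplit, hzS, hW₁⟩ := exists_first_hit P' {w | w ∈ C.support} hvS
  have hzC : z ∈ C.support := hzS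
  have hy'ne_v : y' ≠ v := hvy'.ne'
  have hy'S : y' ∈ C.support := by
    rcases neighbor_eq_of_degree_three hdeg hx hy hvc hxy hcx hcy hvy' with rfl | rfl | rfl
    · rw [hCeq, SimpleGraph.Walk.support_cons]
      exact List.mem_cons_of_mem _ p.start_mem_support
    · have h1 : y' ∈ p.reverse.support := by
        rw [hrev, SimpleGraph.Walk.support_cons]
        exact List.mem_cons_of_mem _ r.start_mem_support
      rw [SimpleGraph.Walk.support_reverse, List.mem_reverse] at h1
      rw [hCeq, SimpleGraph.Walk.support_cons]
      exact List.mem_cons_of_mem _ h1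
    · exact absurd rfl hy'c
  have hy'P' : y' ∈ P'.support := by
    rw [hP'def, SimpleGraph.Walk.support_concat]
    exact List.mem_append_left _ P.end_mem_support
  have hzv : z ≠ v := by
    intro hzveq
    subst hzveq
    by_cases hnil : W₂.Nil
    · have hW₂eq : W₂ = SimpleGraph.Walk.nil := hnil.eq_nil
      rw [hW₂eq, SimpleGraph.Walk.append_nil] at hsplit
      rw [hsplit] at hy'P'
      exact (hW₁ y' hy'P' hy'ne_v) hy'S
    · have h1 : z ∈ W₂.support.tail := end_mem_support_tail W₂ hnil
      have h2 : z ∈ W₁.support := W₁.end_mem_support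
      have hnd := hP'path.support_nodup
      rw [hsplit, SimpleGraph.Walk.support_append, List.nodup_append] at hnd
      exact hnd.2.2 _ h2 _ h1 rfl
  have hW₂nil : ¬ W₂.Nil := not_nil_of_ne' W₂ hzv
  have hvW₁ : v ∉ W₁.support := by
    intro hmem
    have h1 : v ∈ W₂.support.tail := end_mem_support_tail W₂ hW₂nil
    have hnd := hP'path.support_nodup
    rw [hsplit, SimpleGraph.Walk.support_append, List.nodup_append] at hnd
    exact hnd.2.2 _ hmem _ h1 rfl
  have hW₁nodup : W₁.support.Nodup := by
    have hnd := hP'path.support_nodup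
    rw [hsplit, SimpleGraph.Walk.support_append, List.nodup_append] at hnd
    exact hnd.1
  have hW₁path : W₁.IsPath := SimpleGraph.Walk.isPath_def _ |>.mpr hW₁nodup
  -- the connecting path Q from v to z
  set Q := SimpleGraph.Walk.cons hvc W₁ with hQdef
  have hQpath : Q.IsPath := hW₁path.cons hvW₁
  -- split the cycle C at z
  set A := C.takeUntil z hzC with hAdef
  set Bw := C.dropUntil z hzC with hBdef
  have hAB : A.append Bw = C := C.take_spec hzC
  have hCsupp : C.support = A.support ++ Bw.support.tail := by
    rw [← hAB, SimpleGraph.Walk.support_append]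
  have hCtail : C.support.tail = A.support.tail ++ Bw.support.tail := by
    rw [← hAB, SimpleGraph.Walk.tail_support_append]
  have hBnil : ¬ Bw.Nil := not_nil_of_ne' Bw hzv
  have hBtailne : Bw.support.tail ≠ [] :=
    List.ne_nil_of_mem (end_mem_support_tail Bw hBnil)
  have hAnodup : A.support.Nodup := by
    have h1 : C.support.dropLast = A.support ++ (Bw.support.tail).dropLast := by
      rw [hCsupp, List.dropLast_append_of_ne_nil hBtailne]
    have h2 := dropLast_support_nodup hC
    rw [h1, List.nodup_append] at h2
    exact h2.1
  have hApath : A.IsPath := SimpleGraph.Walk.isPath_def _ |>.mpr hAnodup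
  have hAnil : ¬ A.Nil := not_nil_of_ne' A hzv.symm
  have hzA_tail : z ∈ A.support.tail := end_mem_support_tail A hAnil
  have hCtailnodup := hC.support_nodup
  rw [hCtail, List.nodup_append] at hCtailnodup
  have hznotB : z ∉ Bw.support.tail := fun h => hCtailnodup.2.2 _ hzA_tail _ h rfl
  have hBtnodup : Bw.support.tail.Nodup := hCtailnodup.2.1
  -- edges of C split
  have hCedges : C.edges = A.edges ++ Bw.edges := by
    rw [← hAB, SimpleGraph.Walk.edges_append]
  have hCednodup := hC.isCircuit.isTrail.edges_nodup
  rw [hCedges, List.nodup_append] at hCednodup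
  -- edges of Q avoid edges of C
  have hQedges : Q.edges = s(v, c) :: W₁.edges := by
    rw [hQdef, SimpleGraph.Walk.edges_cons]
  have hQCdisj : ∀ e ∈ Q.edges, e ∉ C.edges := by
    intro e he heC
    rw [hQedges] at he
    rcases List.mem_cons.mp he with rfl | heW
    · rcases hat c heC with rfl | rfl
      · exact hcx rfl
      · exact hcy rfl
    · obtain ⟨d, hd, hde⟩ := List.mem_map.mp (by rwa [SimpleGraph.Walk.edges] at heW)
      have hfstm : d.fst ∈ W₁.support := W₁.dart_fst_mem_support_of_mem_darts hd
      have hsndm : d.snd ∈ W₁.support := W₁.dart_snd_mem_support_of_mem_darts hd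
      rw [← hde, dart_edge_eq] at heC
      by_cases hdz : d.fst = z
      · have hsndz : d.snd ≠ z := fun h => d.adj.ne (hdz.trans h.symm)
        have : d.snd ∉ C.support := hW₁ _ hsndm hsndz
        exact this (C.snd_mem_support_of_mem_edges heC)
      · have : d.fst ∉ C.support := hW₁ _ hfstm hdz
        exact this (C.fst_mem_support_of_mem_edges heC)
  -- the two cycles through Q
  have hWQtail : Q.support.tail = W₁.support := by
    rw [hQdef, SimpleGraph.Walk.support_cons]
    rfl
  have hBsubC : ∀ t ∈ Bw.support, t ∈ C.support := fun t ht =>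
    C.support_dropUntil_subset hzC ht
  have hAsubC : ∀ t ∈ A.support, t ∈ C.support := fun t ht =>
    C.support_takeUntil_subset hzC ht
  have hW₁Bdisj : ∀ t ∈ W₁.support, t ∈ Bw.support.tail → False := by
    intro t ht htB
    by_cases htz : t = z
    · subst htz; exact hznotB htB
    · exact hW₁ t ht htz (hBsubC t (List.mem_of_mem_tail htB))
  have hC₁ : (Q.append Bw).IsCycle := by
    rw [SimpleGraph.Walk.isCycle_def]
    refine ⟨?_, ?_, ?_⟩
    · rw [SimpleGraph.Walk.isTrail_def, SimpleGraph.Walk.edges_append, List.nodup_append]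
      refine ⟨hQpath.isTrail.edges_nodup, hCednodup.2.1, ?_⟩
      intro e he e' heB heq
      subst heq
      exact hQCdisj e he (hCedges ▸ List.mem_append_right _ heB)
    · rw [hQdef, SimpleGraph.Walk.cons_append]
      exact fun h => by simpa using congrArg SimpleGraph.Walk.length h
    · rw [SimpleGraph.Walk.tail_support_append, hWQtail, List.nodup_append]
      exact ⟨hW₁nodup, hBtnodup, fun a ha b hb hab => hW₁Bdisj a ha (hab ▸ hb)⟩
  have hC₂ : (Q.append A.reverse).IsCycle := by
    rw [SimpleGraph.Walk.isCycle_def]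
    refine ⟨?_, ?_, ?_⟩
    · rw [SimpleGraph.Walk.isTrail_def, SimpleGraph.Walk.edges_append, List.nodup_append]
      refine ⟨hQpath.isTrail.edges_nodup, ?_, ?_⟩
      · rw [SimpleGraph.Walk.edges_reverse]
        exact List.nodup_reverse.mpr hCednodup.1
      · intro e he e' heA heq
        subst heq
        rw [SimpleGraph.Walk.edges_reverse, List.mem_reverse] at heA
        exact hQCdisj e he (hCedges ▸ List.mem_append_left _ heA)
    · rw [hQdef, SimpleGraph.Walk.cons_append]
      exact fun h => by simpa using congrArg SimpleGraph.Walk.length h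
    · rw [SimpleGraph.Walk.tail_support_append, hWQtail, List.nodup_append]
      refine ⟨hW₁nodup, ?_, ?_⟩
      · rw [SimpleGraph.Walk.support_reverse, List.tail_reverse]
        exact List.nodup_reverse.mpr (hAnodup.sublist (List.dropLast_sublist _))
      · intro t ht t' htA heq
        subst heq
        rw [SimpleGraph.Walk.support_reverse, List.tail_reverse,
          List.mem_reverse] at htA
        by_cases htz : t = z
        · subst htz
          have hgl := getLast_not_mem_dropLast A.support hAnodup A.support_ne_nil
          rw [A.getLast_support] at hgl
          exact hgl htA
        · exact hW₁ t ht htz (hAsubC t (List.mem_of_mem_dropLast htA))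
  -- darts in both cycles lie on Q
  have hdartQ : ∀ d : Γ.Dart, d ∈ (Q.append Bw).darts → d ∈ (Q.append A.reverse).darts →
      d ∈ Q.darts := by
    intro d h1 h2
    rw [SimpleGraph.Walk.darts_append, List.mem_append] at h1 h2
    rcases h1 with h1 | h1
    · exact h1
    rcases h2 with h2 | h2
    · exact h2
    exfalso
    have he1 : d.edge ∈ Bw.edges := by
      rw [SimpleGraph.Walk.edges]
      exact List.mem_map_of_mem h1
    have he2 : d.edge ∈ A.edges := by
      have : d.edge ∈ A.reverse.edges := by
        rw [SimpleGraph.Walk.edges]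
        exact List.mem_map_of_mem h2
      rwa [SimpleGraph.Walk.edges_reverse, List.mem_reverse] at this
    exact hCednodup.2.2 _ he2 _ he1 rfl
  -- the dart set of Q is invariant
  have hinvQ : ∀ d ∈ Q.darts, g.toHom.mapDart d ∈ Q.darts := by
    intro d hd
    have h1 : g.toHom.mapDart d ∈ (Q.append Bw).darts :=
      mapDart_mem_darts g hfix hC₁ (by
        rw [SimpleGraph.Walk.darts_append, List.mem_append]; exact Or.inl hd)
    have h2 : g.toHom.mapDart d ∈ (Q.append A.reverse).darts :=
      mapDart_mem_darts g hfix hC₂ (by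
        rw [SimpleGraph.Walk.darts_append, List.mem_append]; exact Or.inl hd)
    exact hdartQ _ h1 h2
  exact fixed_of_invariant_path g hQpath hzv.symm hinvQ
end

section
/- In the group G = ⟨c, d, x, y | c², d², [c,d], x³, y³, (cx)², [d,x], [c,y], (dy)²⟩, the subgroup H = ⟨x, y⟩ is normal of index 4, is isomorphic to the free product C₃ * C₃, and conjugation by c and by d induce the automorphisms of H sending (x, y) to (x⁻¹, y) and to (x, y⁻¹) respectively. -/
open scoped commutatorElement in
/-- The relators of the Goldschmidt group G₁³ = ⟨c,d,x,y ∣ c², d², [c,d], x³, y³,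
(cx)², [d,x], [c,y], (dy)²⟩, with generators c = 0, d = 1, x = 2, y = 3. -/
def G13rels : Set (FreeGroup (Fin 4)) :=
  {(FreeGroup.of 0) ^ 2, (FreeGroup.of 1) ^ 2, ⁅(FreeGroup.of 0 : FreeGroup (Fin 4)), FreeGroup.of 1⁆,
   (FreeGroup.of 2) ^ 3, (FreeGroup.of 3) ^ 3,
   (FreeGroup.of 0 * FreeGroup.of 2) ^ 2, ⁅(FreeGroup.of 1 : FreeGroup (Fin 4)), FreeGroup.of 2⁆,
   ⁅(FreeGroup.of 0 : FreeGroup (Fin 4)), FreeGroup.of 3⁆, (FreeGroup.of 1 * FreeGroup.of 3) ^ 2}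

/-- The relators of C₃ * C₃ = ⟨x, y ∣ x³, y³⟩, with generators x = 0, y = 1. -/
def C3C3relsG13 : Set (FreeGroup (Fin 2)) :=
  {(FreeGroup.of 0) ^ 3, (FreeGroup.of 1) ^ 3}

namespace G13aux

/-! ### The group `N = C₃ * C₃` and its automorphisms -/

abbrev N := PresentedGroup C3C3relsG13

def X : N := PresentedGroup.of 0
def Y : N := PresentedGroup.of 1

lemma relN {r : FreeGroup (Fin 2)} (h : r ∈ C3C3relsG13) : PresentedGroup.mk C3C3relsG13 r = 1 :=
  (QuotientGroup.eq_one_iff _).mpr (Subgroup.subset_normalClosure h)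

lemma X3 : X ^ 3 = 1 := by
  have := relN (Set.mem_insert _ _)
  simpa [X, PresentedGroup.of] using this

lemma Y3 : Y ^ 3 = 1 := by
  have := relN (Set.mem_insert_of_mem _ rfl)
  simpa [Y, PresentedGroup.of] using this

lemma liftrels {G : Type*} [Group G] (f : Fin 2 → G) (h0 : (f 0)^3 = 1) (h1 : (f 1)^3 = 1) :
    ∀ r ∈ C3C3relsG13, FreeGroup.lift f r = 1 := by
  rintro r (rfl | rfl) <;> simp [h0, h1]

lemma N_ext {G : Type*} [Group G] {f g : N →* G} (h0 : f X = g X) (h1 : f Y = g Y) : f = g := by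
  apply PresentedGroup.ext
  intro i
  fin_cases i <;> assumption

def A : N →* N := PresentedGroup.toGroup (liftrels ![X⁻¹, Y] (by simp [X3]) (by simpa using Y3))

@[simp] lemma A_X : A X = X⁻¹ := by simp [A, X, Y]
@[simp] lemma A_Y : A Y = Y := by simp [A, X, Y]

lemma AA : A.comp A = MonoidHom.id N := N_ext (by simp) (by simp)

def B : N →* N := PresentedGroup.toGroup (liftrels ![X, Y⁻¹] (by simpa using X3) (by simp [Y3]))

@[simp] lemma B_X : B X = X := by simp [B, X, Y]
@[simp] lemma B_Y : B Y = Y⁻¹ := by simp [B, X, Y]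

lemma BB : B.comp B = MonoidHom.id N := N_ext (by simp) (by simp)

def Aaut : MulAut N :=
  { toFun := A, invFun := A,
    left_inv := fun n => DFunLike.congr_fun AA n,
    right_inv := fun n => DFunLike.congr_fun AA n,
    map_mul' := A.map_mul }

def Baut : MulAut N :=
  { toFun := B, invFun := B,
    left_inv := fun n => DFunLike.congr_fun BB n,
    right_inv := fun n => DFunLike.congr_fun BB n,
    map_mul' := B.map_mul }

@[simp] lemma Aaut_apply (n : N) : Aaut n = A n := rfl
@[simp] lemma Baut_apply (n : N) : Baut n = B n := rfl

lemma Aaut_sq : Aaut ^ 2 = 1 := by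
  ext n
  simpa [sq, MulAut.mul_apply] using DFunLike.congr_fun AA n

lemma Baut_sq : Baut ^ 2 = 1 := by
  ext n
  simpa [sq, MulAut.mul_apply] using DFunLike.congr_fun BB n

lemma ABcomm : Commute Aaut Baut := by
  apply MulEquiv.ext
  intro n
  have : (Aaut * Baut).toMonoidHom = (Baut * Aaut).toMonoidHom := by
    apply N_ext <;> simp [MulAut.mul_apply]
  exact DFunLike.congr_fun this n

/-! ### The Klein four-group `Q` and homomorphisms out of it -/

lemma pow_val_add {M : Type*} [Monoid M] {a : M} (ha : a ^ 2 = 1) (i j : ZMod 2) :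
    a ^ ((i + j).val) = a ^ i.val * a ^ j.val := by
  have haa : a * a = 1 := by rw [← pow_two]; exact ha
  rw [ZMod.val_add]
  fin_cases i <;> fin_cases j <;>
    simp [show ((1 : ZMod 2) + 1) = 0 from rfl, show ZMod.val (1 : ZMod 2) = 1 from rfl,
      pow_succ, haa, ZMod.val, Fin.val_add]

abbrev Q := Multiplicative (ZMod 2 × ZMod 2)

def Qa : Q := Multiplicative.ofAdd (1, 0)
def Qb : Q := Multiplicative.ofAdd (0, 1)

lemma Q_cases (P : Q → Prop) (h : ∀ i j : ZMod 2, P (Multiplicative.ofAdd (i, j))) : ∀ q, P q :=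
  fun q => h q.toAdd.1 q.toAdd.2

/-- The homomorphism `Q →* M` sending the two generators to commuting involutions `u, v`. -/
def pairHom {M : Type*} [Group M] (u v : M) (hu : u ^ 2 = 1) (hv : v ^ 2 = 1)
    (huv : Commute u v) : Q →* M where
  toFun q := u ^ (q.toAdd.1.val) * v ^ (q.toAdd.2.val)
  map_one' := by simp
  map_mul' p q := by
    show u ^ ((p.toAdd.1 + q.toAdd.1).val) * v ^ ((p.toAdd.2 + q.toAdd.2).val) = _
    rw [pow_val_add hu, pow_val_add hv]
    exact ((huv.symm.pow_pow _ _).mul_mul_mul_comm _ _).symm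

lemma pairHom_ofAdd {M : Type*} [Group M] (u v : M) (hu : u ^ 2 = 1) (hv : v ^ 2 = 1)
    (huv : Commute u v) (i j : ZMod 2) :
    pairHom u v hu hv huv (Multiplicative.ofAdd (i, j)) = u ^ i.val * v ^ j.val := rfl

lemma pairHom_a {M : Type*} [Group M] (u v : M) (hu : u ^ 2 = 1) (hv : v ^ 2 = 1)
    (huv : Commute u v) : pairHom u v hu hv huv Qa = u := by
  rw [Qa, pairHom_ofAdd]
  simp [show ZMod.val (1 : ZMod 2) = 1 from rfl]

lemma pairHom_b {M : Type*} [Group M] (u v : M) (hu : u ^ 2 = 1) (hv : v ^ 2 = 1)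
    (huv : Commute u v) : pairHom u v hu hv huv Qb = v := by
  rw [Qb, pairHom_ofAdd]
  simp [show ZMod.val (1 : ZMod 2) = 1 from rfl]

/-- The action of `Q` on `N`. -/
def act : Q →* MulAut N := pairHom Aaut Baut Aaut_sq Baut_sq ABcomm

@[simp] lemma act_a : act Qa = Aaut := pairHom_a _ _ _ _ _
@[simp] lemma act_b : act Qb = Baut := pairHom_b _ _ _ _ _

/-! ### The big group `G` -/

abbrev Gp := PresentedGroup G13rels

def cG : Gp := PresentedGroup.of 0
def dG : Gp := PresentedGroup.of 1
def xG : Gp := PresentedGroup.of 2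
def yG : Gp := PresentedGroup.of 3

lemma relG {r : FreeGroup (Fin 4)} (h : r ∈ G13rels) : PresentedGroup.mk G13rels r = 1 :=
  (QuotientGroup.eq_one_iff _).mpr (Subgroup.subset_normalClosure h)

lemma hc2 : cG ^ 2 = 1 := by
  have := relG (Set.mem_insert _ _); simpa [cG, PresentedGroup.of] using this

lemma hd2 : dG ^ 2 = 1 := by
  have := relG (Set.mem_insert_of_mem _ (Set.mem_insert _ _))
  simpa [dG, PresentedGroup.of] using this

lemma hcd : cG * dG = dG * cG := by
  have := relG (Set.mem_insert_of_mem _ (Set.mem_insert_of_mem _ (Set.mem_insert _ _)))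
  rw [map_commutatorElement] at this
  exact commutatorElement_eq_one_iff_mul_comm.mp this

lemma hx3 : xG ^ 3 = 1 := by
  have := relG (Set.mem_insert_of_mem _ (Set.mem_insert_of_mem _ (Set.mem_insert_of_mem _
    (Set.mem_insert _ _))))
  simpa [xG, PresentedGroup.of] using this

lemma hy3 : yG ^ 3 = 1 := by
  have := relG (Set.mem_insert_of_mem _ (Set.mem_insert_of_mem _ (Set.mem_insert_of_mem _
    (Set.mem_insert_of_mem _ (Set.mem_insert _ _)))))
  simpa [yG, PresentedGroup.of] using this

lemma hcx : (cG * xG) ^ 2 = 1 := by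
  have := relG (Set.mem_insert_of_mem _ (Set.mem_insert_of_mem _ (Set.mem_insert_of_mem _
    (Set.mem_insert_of_mem _ (Set.mem_insert_of_mem _ (Set.mem_insert _ _))))))
  simpa [cG, xG, PresentedGroup.of] using this

lemma hdx : dG * xG = xG * dG := by
  have := relG (Set.mem_insert_of_mem _ (Set.mem_insert_of_mem _ (Set.mem_insert_of_mem _
    (Set.mem_insert_of_mem _ (Set.mem_insert_of_mem _ (Set.mem_insert_of_mem _
    (Set.mem_insert _ _)))))))
  rw [map_commutatorElement] at this
  exact commutatorElement_eq_one_iff_mul_comm.mp this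

lemma hcy : cG * yG = yG * cG := by
  have := relG (Set.mem_insert_of_mem _ (Set.mem_insert_of_mem _ (Set.mem_insert_of_mem _
    (Set.mem_insert_of_mem _ (Set.mem_insert_of_mem _ (Set.mem_insert_of_mem _
    (Set.mem_insert_of_mem _ (Set.mem_insert _ _))))))))
  rw [map_commutatorElement] at this
  exact commutatorElement_eq_one_iff_mul_comm.mp this

lemma hdy : (dG * yG) ^ 2 = 1 := by
  have := relG (Set.mem_insert_of_mem _ (Set.mem_insert_of_mem _ (Set.mem_insert_of_mem _
    (Set.mem_insert_of_mem _ (Set.mem_insert_of_mem _ (Set.mem_insert_of_mem _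
    (Set.mem_insert_of_mem _ (Set.mem_insert_of_mem _ rfl))))))))
  simpa [dG, yG, PresentedGroup.of] using this

lemma cinv : cG⁻¹ = cG := inv_eq_of_mul_eq_one_left (by rw [← pow_two]; exact hc2)
lemma dinv : dG⁻¹ = dG := inv_eq_of_mul_eq_one_left (by rw [← pow_two]; exact hd2)

lemma conj_cx : cG * xG * cG⁻¹ = xG⁻¹ := by
  rw [cinv]
  have h : cG * xG * (cG * xG) = 1 := by rw [← pow_two]; exact hcx
  calc cG * xG * cG = cG * xG * (cG * xG) * xG⁻¹ := by group
    _ = xG⁻¹ := by rw [h]; group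

lemma conj_cy : cG * yG * cG⁻¹ = yG := by
  rw [cinv, hcy, mul_assoc, ← pow_two, hc2, mul_one]

lemma conj_dy : dG * yG * dG⁻¹ = yG⁻¹ := by
  rw [dinv]
  have h : dG * yG * (dG * yG) = 1 := by rw [← pow_two]; exact hdy
  calc dG * yG * dG = dG * yG * (dG * yG) * yG⁻¹ := by group
    _ = yG⁻¹ := by rw [h]; group

lemma conj_dx : dG * xG * dG⁻¹ = xG := by
  rw [dinv, hdx, mul_assoc, ← pow_two, hd2, mul_one]

lemma conj_cd_x : (cG * dG) * xG * (cG * dG)⁻¹ = xG⁻¹ := by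
  have h1 : (cG * dG) * xG * (cG * dG)⁻¹ = cG * (dG * xG * dG⁻¹) * cG⁻¹ := by group
  rw [h1, conj_dx, conj_cx]

lemma conj_cd_y : (cG * dG) * yG * (cG * dG)⁻¹ = yG⁻¹ := by
  have h1 : (cG * dG) * yG * (cG * dG)⁻¹ = cG * (dG * yG * dG⁻¹) * cG⁻¹ := by group
  rw [h1, conj_dy]
  calc cG * yG⁻¹ * cG⁻¹ = (cG * yG * cG⁻¹)⁻¹ := by group
    _ = yG⁻¹ := by rw [conj_cy]

lemma conj_c_yinv : cG * yG⁻¹ * cG⁻¹ = yG⁻¹ := by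
  calc cG * yG⁻¹ * cG⁻¹ = (cG * yG * cG⁻¹)⁻¹ := by group
    _ = yG⁻¹ := by rw [conj_cy]

lemma conj_d_xinv : dG * xG⁻¹ * dG⁻¹ = xG⁻¹ := by
  calc dG * xG⁻¹ * dG⁻¹ = (dG * xG * dG⁻¹)⁻¹ := by group
    _ = xG⁻¹ := by rw [conj_dx]

lemma Gp_ext {M : Type*} [Group M] {f g : Gp →* M} (h0 : f cG = g cG) (h1 : f dG = g dG)
    (h2 : f xG = g xG) (h3 : f yG = g yG) : f = g := by
  apply PresentedGroup.ext
  intro i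
  fin_cases i <;> assumption

/-! ### The maps `φG : N →* Gp`, `ψ : Gp →* K`, `θ : K →* Gp` -/

def φG : N →* Gp :=
  PresentedGroup.toGroup (liftrels ![xG, yG] (by simpa using hx3) (by simpa using hy3))

@[simp] lemma φG_X : φG X = xG := by simp [φG, X]
@[simp] lemma φG_Y : φG Y = yG := by simp [φG, Y]

abbrev K := SemidirectProduct N Q act

lemma QaQa : Qa * Qa = 1 := by decide
lemma QbQb : Qb * Qb = 1 := by decide

open scoped commutatorElement in
lemma ψrels : ∀ r ∈ G13rels,
    FreeGroup.lift (![SemidirectProduct.inr Qa, SemidirectProduct.inr Qb,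
      SemidirectProduct.inl X, SemidirectProduct.inl Y] : Fin 4 → K) r = 1 := by
  rintro r (rfl | rfl | rfl | rfl | rfl | rfl | rfl | rfl | rfl)
  · rw [map_pow]
    simp only [FreeGroup.lift_apply_of, Matrix.cons_val_zero]
    rw [pow_two, ← map_mul, QaQa, map_one]
  · rw [map_pow]
    simp only [FreeGroup.lift_apply_of, Matrix.cons_val_one, Matrix.head_cons, Matrix.cons_val_zero]
    rw [pow_two, ← map_mul, QbQb, map_one]
  · rw [map_commutatorElement]
    simp only [FreeGroup.lift_apply_of, Matrix.cons_val_zero, Matrix.cons_val_one, Matrix.head_cons]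
    rw [← map_commutatorElement, show ⁅Qa, Qb⁆ = 1 by decide, map_one]
  · rw [map_pow]
    simp only [FreeGroup.lift_apply_of]
    rw [show ((![SemidirectProduct.inr Qa, SemidirectProduct.inr Qb,
      SemidirectProduct.inl X, SemidirectProduct.inl Y] : Fin 4 → K) 2) =
      SemidirectProduct.inl X from rfl, ← map_pow, X3, map_one]
  · rw [map_pow]
    simp only [FreeGroup.lift_apply_of]
    rw [show ((![SemidirectProduct.inr Qa, SemidirectProduct.inr Qb,
      SemidirectProduct.inl X, SemidirectProduct.inl Y] : Fin 4 → K) 3) =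
      SemidirectProduct.inl Y from rfl, ← map_pow, Y3, map_one]
  · rw [map_pow, map_mul]
    simp only [FreeGroup.lift_apply_of]
    rw [show ((![SemidirectProduct.inr Qa, SemidirectProduct.inr Qb,
      SemidirectProduct.inl X, SemidirectProduct.inl Y] : Fin 4 → K) 0) =
      SemidirectProduct.inr Qa from rfl,
      show ((![SemidirectProduct.inr Qa, SemidirectProduct.inr Qb,
      SemidirectProduct.inl X, SemidirectProduct.inl Y] : Fin 4 → K) 2) =
      SemidirectProduct.inl X from rfl, pow_two]
    refine SemidirectProduct.ext ?_ ?_ <;> simp [QaQa]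
  · rw [map_commutatorElement]
    simp only [FreeGroup.lift_apply_of]
    rw [show ((![SemidirectProduct.inr Qa, SemidirectProduct.inr Qb,
      SemidirectProduct.inl X, SemidirectProduct.inl Y] : Fin 4 → K) 1) =
      SemidirectProduct.inr Qb from rfl,
      show ((![SemidirectProduct.inr Qa, SemidirectProduct.inr Qb,
      SemidirectProduct.inl X, SemidirectProduct.inl Y] : Fin 4 → K) 2) =
      SemidirectProduct.inl X from rfl, commutatorElement_eq_one_iff_mul_comm]
    refine SemidirectProduct.ext ?_ ?_ <;> simp
  · rw [map_commutatorElement]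
    simp only [FreeGroup.lift_apply_of]
    rw [show ((![SemidirectProduct.inr Qa, SemidirectProduct.inr Qb,
      SemidirectProduct.inl X, SemidirectProduct.inl Y] : Fin 4 → K) 0) =
      SemidirectProduct.inr Qa from rfl,
      show ((![SemidirectProduct.inr Qa, SemidirectProduct.inr Qb,
      SemidirectProduct.inl X, SemidirectProduct.inl Y] : Fin 4 → K) 3) =
      SemidirectProduct.inl Y from rfl, commutatorElement_eq_one_iff_mul_comm]
    refine SemidirectProduct.ext ?_ ?_ <;> simp
  · rw [map_pow, map_mul]
    simp only [FreeGroup.lift_apply_of]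
    rw [show ((![SemidirectProduct.inr Qa, SemidirectProduct.inr Qb,
      SemidirectProduct.inl X, SemidirectProduct.inl Y] : Fin 4 → K) 1) =
      SemidirectProduct.inr Qb from rfl,
      show ((![SemidirectProduct.inr Qa, SemidirectProduct.inr Qb,
      SemidirectProduct.inl X, SemidirectProduct.inl Y] : Fin 4 → K) 3) =
      SemidirectProduct.inl Y from rfl, pow_two]
    refine SemidirectProduct.ext ?_ ?_ <;> simp [QbQb]

def ψ : Gp →* K := PresentedGroup.toGroup ψrels

@[simp] lemma ψ_c : ψ cG = SemidirectProduct.inr Qa := by simp [ψ, cG]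
@[simp] lemma ψ_d : ψ dG = SemidirectProduct.inr Qb := by simp [ψ, dG]
@[simp] lemma ψ_x : ψ xG = SemidirectProduct.inl X := by
  rw [ψ, xG, PresentedGroup.toGroup.of]; rfl
@[simp] lemma ψ_y : ψ yG = SemidirectProduct.inl Y := by
  rw [ψ, yG, PresentedGroup.toGroup.of]; rfl

def qhom : Q →* Gp := pairHom cG dG hc2 hd2 hcd

@[simp] lemma qhom_a : qhom Qa = cG := pairHom_a _ _ _ _ _
@[simp] lemma qhom_b : qhom Qb = dG := pairHom_b _ _ _ _ _

lemma compat : ∀ g : Q, φG.comp ((act g).toMonoidHom) =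
    (MulAut.conj (qhom g)).toMonoidHom.comp φG := by
  refine Q_cases _ (fun i j => ?_)
  fin_cases i <;> fin_cases j <;> refine N_ext ?_ ?_ <;>
    simp [act, qhom, pairHom, pairHom_ofAdd, MulAut.conj_apply,
      show ZMod.val (0 : ZMod 2) = 0 from rfl, show ZMod.val (1 : ZMod 2) = 1 from rfl,
      MulAut.mul_apply, ZMod.val, conj_cx, conj_cy, conj_dx, conj_dy, conj_cd_x, conj_cd_y, conj_c_yinv, conj_d_xinv]

def θ : K →* Gp := SemidirectProduct.lift φG qhom compat

lemma theta_psi : θ.comp ψ = MonoidHom.id Gp := by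
  refine Gp_ext ?_ ?_ ?_ ?_ <;> simp [θ]

lemma psi_phi : ψ.comp φG = SemidirectProduct.inl := by
  refine N_ext ?_ ?_ <;> simp

lemma phi_inj : Function.Injective φG := by
  intro a b h
  have h2 : ψ (φG a) = ψ (φG b) := by rw [h]
  rw [show ψ (φG a) = SemidirectProduct.inl a from DFunLike.congr_fun psi_phi a,
    show ψ (φG b) = SemidirectProduct.inl b from DFunLike.congr_fun psi_phi b] at h2
  exact SemidirectProduct.inl_injective h2

lemma range_phi : φG.range = Subgroup.closure {xG, yG} := by
  have h1 : (Set.range (PresentedGroup.of : Fin 2 → N)) = {X, Y} := by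
    ext z
    simp only [Set.mem_range, Fin.exists_fin_two, Set.mem_insert_iff, Set.mem_singleton_iff]
    exact Iff.rfl.trans (by rw [X, Y]; tauto)
  rw [MonoidHom.range_eq_map, ← PresentedGroup.closure_range_of C3C3relsG13,
    MonoidHom.map_closure, h1, Set.image_pair, φG_X, φG_Y]

def π : Gp →* Q := SemidirectProduct.rightHom.comp ψ

lemma H_eq_ker : Subgroup.closure {xG, yG} = π.ker := by
  apply le_antisymm
  · rw [Subgroup.closure_le]
    rintro z (rfl | rfl) <;> simp [π, MonoidHom.mem_ker]
  · intro g hg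
    have h1 : (ψ g).right = 1 := hg
    have h2 : ψ g = SemidirectProduct.inl ((ψ g).left) := by
      refine SemidirectProduct.ext rfl ?_
      simp [h1]
    have h3 : g = φG ((ψ g).left) := by
      have h4 := DFunLike.congr_fun theta_psi g
      simp only [MonoidHom.comp_apply, MonoidHom.id_apply] at h4
      calc g = θ (ψ g) := h4.symm
        _ = θ (SemidirectProduct.inl ((ψ g).left)) := by rw [← h2]
        _ = φG ((ψ g).left) := by rw [θ]; exact SemidirectProduct.lift_inl _ _ _ _
    rw [← range_phi]
    exact ⟨(ψ g).left, h3.symm⟩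

lemma pi_surj : Function.Surjective π := by
  refine Q_cases _ (fun i j => ?_)
  refine ⟨cG ^ i.val * dG ^ j.val, ?_⟩
  have hc : π cG = Qa := by simp [π]
  have hd : π dG = Qb := by simp [π]
  rw [map_mul, map_pow, map_pow, hc, hd]
  fin_cases i <;> fin_cases j <;> decide

lemma index_four : (Subgroup.closure {xG, yG}).index = 4 := by
  rw [H_eq_ker, Subgroup.index_ker, MonoidHom.range_eq_top.mpr pi_surj, Subgroup.card_top]
  simp [Nat.card_eq_fintype_card]

end G13aux

/-- In G = ⟨c,d,x,y ∣ c², d², [c,d], x³, y³, (cx)², [d,x], [c,y], (dy)²⟩,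
the subgroup H = ⟨x, y⟩ is normal of index 4, isomorphic to C₃ * C₃, and conjugation by
c sends (x,y) to (x⁻¹,y) while conjugation by d sends (x,y) to (x,y⁻¹). -/
theorem G13_contains_C3C3_normally :
    let G := PresentedGroup G13rels
    let c : G := PresentedGroup.of 0
    let d : G := PresentedGroup.of 1
    let x : G := PresentedGroup.of 2
    let y : G := PresentedGroup.of 3
    let H : Subgroup G := Subgroup.closure {x, y}
    H.Normal ∧ H.index = 4 ∧
    (∃ φ : PresentedGroup C3C3relsG13 →* G, Function.Injective φ ∧
      MonoidHom.range φ = H ∧ φ (PresentedGroup.of 0) = x ∧ φ (PresentedGroup.of 1) = y) ∧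
    c * x * c⁻¹ = x⁻¹ ∧ c * y * c⁻¹ = y ∧ d * x * d⁻¹ = x ∧ d * y * d⁻¹ = y⁻¹ := by
  intro G c d x y H
  refine ⟨?_, ?_, ⟨G13aux.φG, G13aux.phi_inj, ?_, G13aux.φG_X, G13aux.φG_Y⟩,
    G13aux.conj_cx, G13aux.conj_cy, G13aux.conj_dx, G13aux.conj_dy⟩
  · show (Subgroup.closure {G13aux.xG, G13aux.yG}).Normal
    rw [G13aux.H_eq_ker]
    exact G13aux.π.normal_ker
  · exact G13aux.index_four
  · exact G13aux.range_phi
end
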